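/- arXiv:1010.5288 — 6 statements merged into one kernel-verified Lean document; each statement's English description precedes it below -/
import Mathlib

section
/- For every n ≥ 3 and every v in the alternating group A_n, there exist unique elements v_i ∈ R_i for 3 ≤ i ≤ n such that v = v_3 · v_4 ⋯ v_n (the canonical presentation of v). -/
/-! Points of `Fin n` are the letters shifted down by one, so the factor `v_{m+1} ∈ R_{m+1}` moves
the point `m` and fixes every point above it. Hence `v_3 ⋯ v_m` fixes `m`, and `v_3 ⋯ v_{m+1}` pulls
`m` back to the same point as `v_{m+1}` does. An element of `R_{m+1}` is determined by that point,
which can be any point `≤ m`: this gives uniqueness by induction on `m`, and existence by splitting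
off from `v` the factor with `v_{m+1}⁻¹ m = v⁻¹ m`. The induction stops at `m = 2`, where an even
permutation fixing all points `≥ 2` is the identity. -/

/-- The set `T(A_n) = {(1 2)(i j) : 1 ≤ i < j ≤ n}` of A-transpositions, viewed inside
`Equiv.Perm (Fin n)` (letter `k` corresponds to `(k-1 : Fin n)`). -/
def ATrans (n : ℕ) : Set (Equiv.Perm (Fin n)) :=
  {v | ∃ (h1 : 1 < n) (i j : Fin n), i < j ∧
       v = Equiv.swap (⟨0, by omega⟩ : Fin n) ⟨1, h1⟩ * Equiv.swap i j}

/-- Length of a permutation with respect to the generating set `T(A_n)`. -/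
noncomputable def alen (n : ℕ) (v : Equiv.Perm (Fin n)) : ℕ :=
  sInf {k | ∃ l : List (Equiv.Perm (Fin n)),
    (∀ x ∈ l, x ∈ ATrans n) ∧ l.length = k ∧ l.prod = v}

/-- `R_i = {(1 2)(j i) : 1 ≤ j < i} ∪ {e}`, viewed as a subset of `Equiv.Perm (Fin n)`
(letter `k` corresponds to `(k-1 : Fin n)`). -/
def Rset (n i : ℕ) : Set (Equiv.Perm (Fin n)) :=
  {v | v = 1 ∨ ∃ (h1 : 1 < n) (hi : i - 1 < n) (j : Fin n),
    (j : ℕ) + 1 < i ∧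
    v = Equiv.swap (⟨0, by omega⟩ : Fin n) ⟨1, h1⟩ * Equiv.swap j ⟨i - 1, hi⟩}

open Equiv Function

theorem Equiv.Perm.eq_one_of_mem_alternatingGroup_of_card_support_le_two {α : Type*}
    [Fintype α] [DecidableEq α] {v : Perm α} (hv : v ∈ alternatingGroup α)
    (h : v.support.card ≤ 2) : v = 1 := by
  rcases Nat.lt_or_ge v.support.card 2 with h2 | h2
  · exact Perm.card_support_le_one.mp (by have := v.card_support_ne_one; omega)
  · rw [Perm.mem_alternatingGroup, (Perm.card_support_eq_two.mp (by omega)).sign_eq] at hv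
    exact absurd hv (by decide)

theorem eq_one_of_mem_alternatingGroup_of_forall_two_le {n : ℕ} {v : Perm (Fin n)}
    (hv : v ∈ alternatingGroup (Fin n)) (hfix : ∀ k : Fin n, 2 ≤ (k : ℕ) → v k = k) :
    v = 1 := by
  refine Perm.eq_one_of_mem_alternatingGroup_of_card_support_le_two hv ?_
  calc v.support.card ≤ (Finset.range 2).card :=
        Finset.card_le_card_of_injOn Fin.val (fun k hk => ?_) Fin.val_injective.injOn
    _ = 2 := Finset.card_range 2
  by_contra hk2
  exact Perm.mem_support.mp hk (hfix k (by simp at hk2; omega))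

section RFactor

variable {α : Type*} [DecidableEq α]

/-- For `a, b, c` the points `0, 1, m` of `Fin n` (with `2 ≤ m`), these are exactly the elements
of `R_{m+1}`, `rFactor a b c j` being the one sending `j` to `c`. -/
def rFactor (a b c j : α) : Perm α :=
  if j = c then 1 else swap a b * swap j c

variable {a b c : α}

theorem rFactor_apply_self (hca : c ≠ a) (hcb : c ≠ b) (j : α) : rFactor a b c j j = c := by
  unfold rFactor
  split_ifs with hj
  · exact hj
  · rw [Perm.mul_apply, swap_apply_left, swap_apply_of_ne_of_ne hca hcb]

theorem rFactor_inv_apply (hca : c ≠ a) (hcb : c ≠ b) (j : α) : (rFactor a b c j)⁻¹ c = j :=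
  Perm.inv_eq_iff_eq.mpr (rFactor_apply_self hca hcb j).symm

end RFactor

theorem apply_eq_self_of_mem_Rset {n i : ℕ} {g : Perm (Fin n)} (hg : g ∈ Rset n i) {k : Fin n}
    (hk : i ≤ (k : ℕ)) : g k = k := by
  rcases hg with rfl | ⟨h1, hi, j, hj, rfl⟩
  · rfl
  · rw [Perm.mul_apply, swap_apply_of_ne_of_ne (a := j), swap_apply_of_ne_of_ne] <;>
      simp only [ne_eq, Fin.ext_iff] <;> omega

theorem Rset_subset_alternatingGroup (n i : ℕ) : Rset n i ⊆ alternatingGroup (Fin n) := by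
  rintro g (rfl | ⟨h1, hi, j, hj, rfl⟩)
  · exact one_mem _
  · rw [SetLike.mem_coe, Perm.mem_alternatingGroup, Perm.sign_mul,
      Perm.sign_swap (by simp [Fin.ext_iff]), Perm.sign_swap (by simp [Fin.ext_iff]; omega)]
    decide

theorem rFactor_mem_Rset {n m : ℕ} (hm : 2 ≤ m) (hmn : m < n) {j : Fin n} (hj : (j : ℕ) ≤ m) :
    rFactor ⟨0, by omega⟩ ⟨1, by omega⟩ ⟨m, hmn⟩ j ∈ Rset n (m + 1) := by
  unfold rFactor
  split_ifs with hjm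
  · exact Or.inl rfl
  · exact Or.inr ⟨by omega, hmn, j, by simp [Fin.ext_iff] at hjm; omega, rfl⟩

theorem eq_rFactor_of_mem_Rset {n m : ℕ} (hm : 2 ≤ m) (hmn : m < n) {g : Perm (Fin n)}
    (hg : g ∈ Rset n (m + 1)) :
    g = rFactor ⟨0, by omega⟩ ⟨1, by omega⟩ ⟨m, hmn⟩ (g⁻¹ ⟨m, hmn⟩) := by
  rcases hg with rfl | ⟨h1, hi, j, hj, rfl⟩
  · exact (if_pos rfl).symm
  · have hjm : j ≠ ⟨m, hmn⟩ := Fin.ne_of_val_ne (by simp; omega)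
    have hg : swap ⟨0, by omega⟩ ⟨1, h1⟩ * swap j ⟨m + 1 - 1, hi⟩ =
        rFactor ⟨0, by omega⟩ ⟨1, by omega⟩ ⟨m, hmn⟩ j := (if_neg hjm).symm
    rw [hg, rFactor_inv_apply (Fin.ne_of_val_ne (by simp; omega))
      (Fin.ne_of_val_ne (by simp; omega))]

section ProdFromThree

variable {G : Type*} [Monoid G] (f : ℕ → G)

def prodFromThree (m : ℕ) : G :=
  (((List.range (m + 1)).drop 3).map f).prod

theorem mem_drop_three_range {i m : ℕ} (hi : i ∈ (List.range (m + 1)).drop 3) :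
    3 ≤ i ∧ i ≤ m := by
  rw [List.range_eq_range', List.drop_range', List.mem_range'_1] at hi
  omega

theorem prodFromThree_of_le_two {m : ℕ} (hm : m ≤ 2) : prodFromThree f m = 1 := by
  rw [prodFromThree, List.drop_eq_nil_of_le (by simp; omega), List.map_nil, List.prod_nil]

theorem prodFromThree_succ {m : ℕ} (hm : 2 ≤ m) :
    prodFromThree f (m + 1) = prodFromThree f m * f (m + 1) := by
  rw [prodFromThree, List.range_succ, List.drop_append_of_le_length (by simp; omega),
    List.map_append, List.prod_append, List.map_singleton, List.prod_singleton, prodFromThree]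

theorem prodFromThree_update_succ (m : ℕ) (x : G) :
    prodFromThree (update f (m + 1) x) m = prodFromThree f m :=
  congrArg List.prod <| List.map_congr_left fun i hi =>
    update_of_ne (by have := mem_drop_three_range hi; omega) x f

end ProdFromThree

theorem prodFromThree_apply_eq_self {n m : ℕ} {f : ℕ → Perm (Fin n)}
    (hf : ∀ i, 3 ≤ i → i ≤ m → f i ∈ Rset n i) {k : Fin n} (hk : m ≤ (k : ℕ)) :
    prodFromThree f m k = k := by
  suffices prodFromThree f m ∈ MulAction.stabilizer (Perm (Fin n)) k from this
  refine Subgroup.list_prod_mem _ fun g hg => ?_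
  obtain ⟨i, hi, rfl⟩ := List.mem_map.mp hg
  obtain ⟨hi3, him⟩ := mem_drop_three_range hi
  exact apply_eq_self_of_mem_Rset (hf i hi3 him) (by omega)

structure IsCanonicalFactors (n m : ℕ) (f : ℕ → Perm (Fin n)) : Prop where
  eq_one : ∀ i, (i < 3 ∨ m < i) → f i = 1
  mem_Rset : ∀ i, 3 ≤ i → i ≤ m → f i ∈ Rset n i

namespace IsCanonicalFactors

variable {n m : ℕ} {f : ℕ → Perm (Fin n)}

theorem one (n m : ℕ) : IsCanonicalFactors n m 1 :=
  ⟨fun _ _ => rfl, fun _ _ _ => Or.inl rfl⟩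

theorem eq_one_of_le_two (hf : IsCanonicalFactors n m f) (hm : m ≤ 2) : f = 1 :=
  funext fun i => hf.eq_one i (by omega)

theorem update_succ (hf : IsCanonicalFactors n m f) (hm : 2 ≤ m) {g : Perm (Fin n)}
    (hg : g ∈ Rset n (m + 1)) :
    IsCanonicalFactors n (m + 1) (update f (m + 1) g) := by
  refine ⟨fun i hi => ?_, fun i hi3 him => ?_⟩ <;> obtain rfl | hne := eq_or_ne i (m + 1)
  · omega
  · rw [update_of_ne hne]; exact hf.eq_one i (by omega)
  · rwa [update_self]
  · rw [update_of_ne hne]; exact hf.mem_Rset i hi3 (by omega)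

theorem update_succ_one (hf : IsCanonicalFactors n (m + 1) f) :
    IsCanonicalFactors n m (update f (m + 1) 1) := by
  refine ⟨fun i hi => ?_, fun i hi3 him => ?_⟩
  · obtain rfl | hne := eq_or_ne i (m + 1)
    · exact update_self _ _ _
    · rw [update_of_ne hne]; exact hf.eq_one i (by omega)
  · rw [update_of_ne (by omega)]; exact hf.mem_Rset i hi3 (by omega)

theorem prodFromThree_inv_apply (hf : IsCanonicalFactors n (m + 1) f) (hm : 2 ≤ m)
    (hmn : m < n) : (prodFromThree f (m + 1))⁻¹ ⟨m, hmn⟩ = (f (m + 1))⁻¹ ⟨m, hmn⟩ := by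
  have hfix : (prodFromThree f m)⁻¹ ⟨m, hmn⟩ = ⟨m, hmn⟩ :=
    Perm.inv_eq_iff_eq.mpr (prodFromThree_apply_eq_self (m := m)
      (fun i hi3 him => hf.mem_Rset i hi3 (by omega)) le_rfl).symm
  rw [prodFromThree_succ _ hm, mul_inv_rev, Perm.mul_apply, hfix]

end IsCanonicalFactors

theorem exists_isCanonicalFactors_of_le_two {n m : ℕ} (hm : m ≤ 2) {v : Perm (Fin n)}
    (hv : v ∈ alternatingGroup (Fin n)) (hfix : ∀ k : Fin n, m ≤ (k : ℕ) → v k = k) :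
    ∃ f, IsCanonicalFactors n m f ∧ prodFromThree f m = v :=
  ⟨1, .one n m, by rw [prodFromThree_of_le_two _ hm,
    eq_one_of_mem_alternatingGroup_of_forall_two_le hv fun k hk => hfix k (by omega)]⟩

theorem exists_isCanonicalFactors {n m : ℕ} (hmn : m ≤ n) {v : Perm (Fin n)}
    (hv : v ∈ alternatingGroup (Fin n)) (hfix : ∀ k : Fin n, m ≤ (k : ℕ) → v k = k) :
    ∃ f, IsCanonicalFactors n m f ∧ prodFromThree f m = v := by
  induction m generalizing v with
  | zero => exact exists_isCanonicalFactors_of_le_two (by omega) hv hfix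
  | succ m ih =>
    obtain hm | hm := Nat.lt_or_ge m 2
    · exact exists_isCanonicalFactors_of_le_two hm hv hfix
    set M : Fin n := ⟨m, hmn⟩
    set j := v⁻¹ M
    have hvj : v j = M := v.apply_symm_apply M
    have hjm : (j : ℕ) ≤ m := by
      by_contra! hj
      have := (hfix j hj).symm.trans hvj
      simp [Fin.ext_iff, M] at this
      omega
    set g := rFactor ⟨0, by omega⟩ ⟨1, by omega⟩ M j
    have hg : g ∈ Rset n (m + 1) := rFactor_mem_Rset hm hmn hjm
    have hgM : g⁻¹ M = j := rFactor_inv_apply (Fin.ne_of_val_ne (by simp [M]; omega))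
      (Fin.ne_of_val_ne (by simp [M]; omega)) j
    have hw : v * g⁻¹ ∈ alternatingGroup (Fin n) :=
      mul_mem hv (inv_mem (Rset_subset_alternatingGroup n (m + 1) hg))
    have hwfix (k : Fin n) (hk : m ≤ (k : ℕ)) : (v * g⁻¹) k = k := by
      obtain hkm | hkm := hk.eq_or_lt
      · obtain rfl : M = k := Fin.ext hkm
        rw [Perm.mul_apply, hgM, hvj]
      · rw [Perm.mul_apply, Perm.inv_eq_iff_eq.mpr (apply_eq_self_of_mem_Rset hg hkm).symm,
          hfix k hkm]
    obtain ⟨f, hf, hprod⟩ := ih (by omega) hw hwfix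
    refine ⟨update f (m + 1) g, hf.update_succ hm hg, ?_⟩
    rw [prodFromThree_succ _ hm, prodFromThree_update_succ, update_self, hprod,
      inv_mul_cancel_right]

theorem IsCanonicalFactors.eq_of_prodFromThree_eq {n m : ℕ} (hmn : m ≤ n)
    {f f' : ℕ → Perm (Fin n)} (hf : IsCanonicalFactors n m f) (hf' : IsCanonicalFactors n m f')
    (h : prodFromThree f m = prodFromThree f' m) : f = f' := by
  induction m generalizing f f' with
  | zero => rw [hf.eq_one_of_le_two (by omega), hf'.eq_one_of_le_two (by omega)]
  | succ m ih =>
    obtain hm | hm := Nat.lt_or_ge m 2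
    · rw [hf.eq_one_of_le_two hm, hf'.eq_one_of_le_two hm]
    have hlast : f (m + 1) = f' (m + 1) := by
      rw [eq_rFactor_of_mem_Rset hm hmn (hf.mem_Rset _ (by omega) le_rfl),
        eq_rFactor_of_mem_Rset hm hmn (hf'.mem_Rset _ (by omega) le_rfl),
        ← hf.prodFromThree_inv_apply hm hmn, ← hf'.prodFromThree_inv_apply hm hmn, h]
    have hinit : prodFromThree f m = prodFromThree f' m := by
      rw [prodFromThree_succ _ hm, prodFromThree_succ _ hm, hlast] at h
      exact mul_right_cancel h
    have hrest := ih (by omega) hf.update_succ_one hf'.update_succ_one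
      (by rwa [prodFromThree_update_succ, prodFromThree_update_succ])
    calc f = update (update f (m + 1) 1) (m + 1) (f (m + 1)) := by
          rw [update_idem, update_eq_self]
      _ = update (update f' (m + 1) 1) (m + 1) (f' (m + 1)) := by rw [hrest, hlast]
      _ = f' := by rw [update_idem, update_eq_self]

theorem stmt_1_general (n : ℕ) (v : Equiv.Perm (Fin n))
    (hv : v ∈ alternatingGroup (Fin n)) :
    ∃! f : ℕ → Equiv.Perm (Fin n),
      (∀ i, (i < 3 ∨ n < i) → f i = 1) ∧
      (∀ i, 3 ≤ i → i ≤ n → f i ∈ Rset n i) ∧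
      (((List.range (n + 1)).drop 3).map f).prod = v := by
  obtain ⟨f, hf, hprod⟩ :=
    exists_isCanonicalFactors le_rfl hv fun k hk => absurd k.isLt (by omega)
  refine ⟨f, ⟨hf.eq_one, hf.mem_Rset, hprod⟩, fun f' ⟨hf'1, hf'R, hprod'⟩ => ?_⟩
  exact IsCanonicalFactors.eq_of_prodFromThree_eq le_rfl ⟨hf'1, hf'R⟩ hf
    (hprod'.trans hprod.symm)

/-- For every `n ≥ 3` and every `v ∈ A_n` there exist unique `v_i ∈ R_i` (`3 ≤ i ≤ n`)
with `v = v_3 * v_4 * ⋯ * v_n` (the canonical presentation of `v`). The factors are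
encoded as a function `f : ℕ → Equiv.Perm (Fin n)` which equals `1` outside `[3, n]`. -/
theorem stmt_1 (n : ℕ) (hn : 3 ≤ n) (v : Equiv.Perm (Fin n))
    (hv : v ∈ alternatingGroup (Fin n)) :
    ∃! f : ℕ → Equiv.Perm (Fin n),
      (∀ i, (i < 3 ∨ n < i) → f i = 1) ∧
      (∀ i, 3 ≤ i → i ≤ n → f i ∈ Rset n i) ∧
      (((List.range (n + 1)).drop 3).map f).prod = v :=
  stmt_1_general n v hv
end

section
/- For every n ≥ 3 and every v ∈ A_n, if v = v_3 · v_4 ⋯ v_n is the canonical presentation of v (with v_i ∈ R_i for 3 ≤ i ≤ n), then the number of indices i with v_i ≠ e equals ℓ(v), the length of v with respect to the generating set T(A_n). -/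
open Equiv Module

section Hyperplane
variable {K V : Type*} [Field K] [AddCommGroup V] [Module K V] [FiniteDimensional K V]

lemma Submodule.finrank_inf_ker_add_one {S : Submodule K V} {φ : Dual K V}
    (hS : ¬ S ≤ LinearMap.ker φ) :
    finrank K ↥(S ⊓ LinearMap.ker φ) + 1 = finrank K S := by
  have hφS : φ.domRestrict S ≠ 0 := fun h ↦
    hS fun x hx ↦ LinearMap.mem_ker.mpr (LinearMap.congr_fun h ⟨x, hx⟩)
  rw [← map_comap_subtype, finrank_map_subtype_eq, ← LinearMap.ker_domRestrict]
  exact Dual.finrank_ker_add_one_of_ne_zero hφS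

lemma Submodule.finrank_le_finrank_inf_ker_add_one (S : Submodule K V) (φ : Dual K V) :
    finrank K S ≤ finrank K ↥(S ⊓ LinearMap.ker φ) + 1 := by
  by_cases hS : S ≤ LinearMap.ker φ
  · rw [inf_eq_left.mpr hS]
    exact Nat.le_succ _
  · exact (finrank_inf_ker_add_one hS).ge

end Hyperplane

section CycleRank
variable {α : Type*}

def invariantFunctions (σ : Perm α) : Submodule ℚ (α → ℚ) where
  carrier := {f | ∀ y, f (σ y) = f y}
  add_mem' hf hg y := by simp [hf y, hg y]
  zero_mem' _ := rfl
  smul_mem' c f hf y := by simp [hf y]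

/-- The number of cycles of `σ`, fixed points included: an invariant function is the same
thing as a function on the cycles. -/
noncomputable def cycleRank (σ : Perm α) : ℕ := finrank ℚ (invariantFunctions σ)

lemma cycleRank_one [Fintype α] : cycleRank (1 : Perm α) = Fintype.card α := by
  have h : invariantFunctions (1 : Perm α) = ⊤ := eq_top_iff.mpr fun f _ y ↦ rfl
  rw [cycleRank, h, finrank_top, Module.finrank_fintype_fun_eq_card]

def coordDiff (a b : α) : Dual ℚ (α → ℚ) :=
  (LinearMap.proj a : (α → ℚ) →ₗ[ℚ] ℚ) - LinearMap.proj b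

lemma coordDiff_apply (a b : α) (f : α → ℚ) : coordDiff a b f = f a - f b := rfl

variable [DecidableEq α]

lemma apply_swap_apply_of_eq {β : Type*} {f : α → β} {a b : α} (h : f a = f b) (y : α) :
    f (swap a b y) = f y := by
  rw [swap_apply_def]
  split_ifs with hya hyb
  · rw [hya, h]
  · rw [hyb, h]
  · rfl

lemma invariantFunctions_inf_ker_le (σ : Perm α) (a b : α) :
    invariantFunctions σ ⊓ LinearMap.ker (coordDiff a b) ≤ invariantFunctions (σ * swap a b) := by
  rintro f ⟨hf, hab⟩ y
  have hab : f a = f b := sub_eq_zero.mp (LinearMap.mem_ker.mp hab)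
  rw [Perm.mul_apply, hf, apply_swap_apply_of_eq hab]

lemma invariantFunctions_mul_swap {σ : Perm α} {j p : α} (hp : σ p = p) :
    invariantFunctions (σ * swap j p) = invariantFunctions σ ⊓ LinearMap.ker (coordDiff j p) := by
  refine le_antisymm (fun f hf ↦ ?_) (invariantFunctions_inf_ker_le σ j p)
  have hjp : f j = f p := by
    simpa [hp] using (hf j).symm
  refine ⟨fun y ↦ ?_, LinearMap.mem_ker.mpr (sub_eq_zero.mpr hjp)⟩
  calc f (σ y) = f (σ (swap j p (swap j p y))) := by rw [swap_apply_self]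
    _ = f (swap j p y) := hf _
    _ = f y := apply_swap_apply_of_eq hjp y

variable [Fintype α]

lemma cycleRank_le_mul_swap_add_one (σ : Perm α) (a b : α) :
    cycleRank σ ≤ cycleRank (σ * swap a b) + 1 :=
  (Submodule.finrank_le_finrank_inf_ker_add_one _ (coordDiff a b)).trans
    (Nat.add_le_add_right (Submodule.finrank_mono (invariantFunctions_inf_ker_le σ a b)) 1)

lemma cycleRank_mul_swap_add_one {σ : Perm α} {j p : α} (hp : σ p = p) (hjp : j ≠ p) :
    cycleRank (σ * swap j p) + 1 = cycleRank σ := by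
  have hind : Pi.single p 1 ∈ invariantFunctions σ := fun y ↦ by
    by_cases hy : y = p
    · rw [hy, hp]
    · rw [Pi.single_eq_of_ne hy, Pi.single_eq_of_ne (fun h ↦ hy (σ.injective (h.trans hp.symm)))]
  rw [cycleRank, cycleRank, invariantFunctions_mul_swap hp]
  refine Submodule.finrank_inf_ker_add_one fun hle ↦ ?_
  simpa [coordDiff_apply, hjp] using LinearMap.mem_ker.mp (hle hind)

end CycleRank

section CycleRankSum
variable {α : Type*} [DecidableEq α]

lemma mul_swap_mul_mul_swap (σ : Perm α) (a b i j : α) :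
    σ * (swap a b * swap i j) * swap a b = σ * swap (swap a b i) (swap a b j) := by
  rw [swap_apply_apply, swap_inv, mul_assoc, mul_assoc]

variable [Fintype α]

noncomputable def cycleRankSum (s σ : Perm α) : ℕ := cycleRank σ + cycleRank (σ * s)

lemma cycleRankSum_one {a b : α} (hab : a ≠ b) :
    cycleRankSum (swap a b) 1 + 1 = 2 * Fintype.card α := by
  have h := cycleRank_mul_swap_add_one (σ := 1) (rfl : (1 : Perm α) b = b) hab
  rw [cycleRank_one] at h
  rw [cycleRankSum, cycleRank_one]
  omega

lemma cycleRankSum_le_mul_add_two (σ : Perm α) (a b i j : α) :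
    cycleRankSum (swap a b) σ ≤ cycleRankSum (swap a b) (σ * (swap a b * swap i j)) + 2 := by
  have h₁ := cycleRank_le_mul_swap_add_one (σ * swap a b) i j
  have h₂ := cycleRank_le_mul_swap_add_one σ (swap a b i) (swap a b j)
  rw [mul_assoc] at h₁
  rw [← mul_swap_mul_mul_swap] at h₂
  rw [cycleRankSum, cycleRankSum]
  omega

lemma cycleRankSum_mul_add_two {σ : Perm α} {a b j p : α} (hp : σ p = p) (hap : a ≠ p)
    (hbp : b ≠ p) (hjp : j ≠ p) :
    cycleRankSum (swap a b) (σ * (swap a b * swap j p)) + 2 = cycleRankSum (swap a b) σ := by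
  have hsp : swap a b p = p := swap_apply_of_ne_of_ne hap.symm hbp.symm
  have hsj : swap a b j ≠ p := hsp ▸ (swap a b).injective.ne hjp
  have h₁ := cycleRank_mul_swap_add_one (σ := σ * swap a b) (by rw [Perm.mul_apply, hsp, hp]) hjp
  have h₂ := cycleRank_mul_swap_add_one hp hsj
  rw [mul_assoc] at h₁
  rw [← hsp, ← mul_swap_mul_mul_swap] at h₂
  rw [cycleRankSum, cycleRankSum]
  omega

lemma two_mul_card_le_cycleRankSum_prod {a b : α} (hab : a ≠ b) {l : List (Perm α)}
    (hl : ∀ t ∈ l, ∃ i j, t = swap a b * swap i j) :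
    2 * Fintype.card α ≤ cycleRankSum (swap a b) l.prod + 2 * l.length + 1 := by
  induction l using List.reverseRecOn with
  | nil => simpa using (cycleRankSum_one hab).ge
  | append_singleton l t ih =>
    obtain ⟨i, j, rfl⟩ := hl _ (List.mem_append_right _ (List.mem_singleton_self _))
    have ih := ih fun t ht ↦ hl t (List.mem_append_left _ ht)
    have hstep := cycleRankSum_le_mul_add_two l.prod a b i j
    rw [List.prod_append, List.prod_singleton, List.length_append, List.length_singleton]
    omega

end CycleRankSum

section PrefixProd
variable {M : Type*} [Monoid M]

def prefixProd (f : ℕ → M) (m : ℕ) : M := (((List.range (m + 1)).drop 3).map f).prod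

def nontrivialCount [DecidableEq M] (f : ℕ → M) (m : ℕ) : ℕ := ((Finset.Icc 3 m).filter (fun i => f i ≠ 1)).card

lemma prefixProd_two (f : ℕ → M) : prefixProd f 2 = 1 := rfl

lemma prefixProd_succ (f : ℕ → M) {m : ℕ} (hm : 2 ≤ m) :
    prefixProd f (m + 1) = prefixProd f m * f (m + 1) := by
  rw [prefixProd, prefixProd, List.range_succ, List.drop_append_of_le_length (by simp; omega),
    List.map_append, List.prod_append, List.map_singleton, List.prod_singleton]

lemma nontrivialCount_two [DecidableEq M] (f : ℕ → M) : nontrivialCount f 2 = 0 := by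
  simp [nontrivialCount]

lemma nontrivialCount_succ [DecidableEq M] (f : ℕ → M) {m : ℕ} (hm : 2 ≤ m) :
    nontrivialCount f (m + 1) = nontrivialCount f m + if f (m + 1) = 1 then 0 else 1 := by
  rw [nontrivialCount, nontrivialCount, ← Finset.insert_Icc_right_eq_Icc_add_one (by omega),
    Finset.filter_insert]
  by_cases h : f (m + 1) = 1
  · simp [h]
  · rw [if_pos h, if_neg h, Finset.card_insert_of_notMem (by simp)]

end PrefixProd

section Alternating
variable {n : ℕ}

lemma alen_eq_of_forall_le {v : Perm (Fin n)} {k : ℕ}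
    (hw : ∃ l : List (Perm (Fin n)), (∀ x ∈ l, x ∈ ATrans n) ∧ l.length = k ∧ l.prod = v)
    (hmin : ∀ l : List (Perm (Fin n)), (∀ x ∈ l, x ∈ ATrans n) → l.prod = v → k ≤ l.length) :
    alen n v = k :=
  le_antisymm (Nat.sInf_le hw) <| le_csInf ⟨k, hw⟩ fun _ ⟨l, hl, hlen, hlv⟩ ↦ hlen ▸ hmin l hl hlv

lemma exists_eq_swap_mul_swap_of_mem_ATrans (h1 : 1 < n) {t : Perm (Fin n)} (ht : t ∈ ATrans n) :
    ∃ i j, t = swap (⟨0, by omega⟩ : Fin n) ⟨1, h1⟩ * swap i j := by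
  obtain ⟨_, i, j, _, rfl⟩ := ht
  exact ⟨i, j, rfl⟩

lemma mem_ATrans_of_mem_Rset {i : ℕ} {u : Perm (Fin n)} (hu : u ∈ Rset n i) (hu1 : u ≠ 1) :
    u ∈ ATrans n := by
  obtain hu | ⟨h1, hi, j, hj, rfl⟩ := hu
  · exact absurd hu hu1
  · exact ⟨h1, j, ⟨i - 1, hi⟩, Fin.lt_def.mpr (by simp only; omega), rfl⟩

lemma Rset_apply_of_le {i : ℕ} {u : Perm (Fin n)} (hu : u ∈ Rset n i) {y : Fin n}
    (hy : i ≤ y) : u y = y := by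
  obtain rfl | ⟨h1, hi, j, hj, rfl⟩ := hu
  · rfl
  · rw [Perm.mul_apply, swap_apply_of_ne_of_ne (x := y) (by simp [Fin.ext_iff]; omega)
      (by simp [Fin.ext_iff]; omega)]
    exact swap_apply_of_ne_of_ne (by simp [Fin.ext_iff]; omega) (by simp [Fin.ext_iff]; omega)

lemma cycleRankSum_mul_of_mem_Rset (h1 : 1 < n) {i : ℕ} (hi : 3 ≤ i) {u : Perm (Fin n)}
    (hu : u ∈ Rset n i) (hu1 : u ≠ 1) {x : Perm (Fin n)}
    (hx : ∀ y : Fin n, i - 1 ≤ y → x y = y) :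
    cycleRankSum (swap (⟨0, by omega⟩ : Fin n) ⟨1, h1⟩) (x * u) + 2 =
      cycleRankSum (swap (⟨0, by omega⟩ : Fin n) ⟨1, h1⟩) x := by
  obtain hu | ⟨_, hi', j, hj, rfl⟩ := hu
  · exact absurd hu hu1
  · exact cycleRankSum_mul_add_two (hx _ le_rfl) (by simp [Fin.ext_iff]; omega)
      (by simp [Fin.ext_iff]; omega) (by simp [Fin.ext_iff]; omega)

variable {f : ℕ → Perm (Fin n)} (hf : ∀ i, 3 ≤ i → i ≤ n → f i ∈ Rset n i)
include hf

lemma prefixProd_apply_of_le {m : ℕ} (hm : 2 ≤ m) {y : Fin n} (hy : m ≤ y) :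
    prefixProd f m y = y := by
  induction m, hm using Nat.le_induction with
  | base => rfl
  | succ m hm ih =>
    rw [prefixProd_succ f hm, Perm.mul_apply, Rset_apply_of_le (hf _ (by omega) (by omega)) hy,
      ih (by omega)]

lemma exists_word_prefixProd {m : ℕ} (hm : 2 ≤ m) (hmn : m ≤ n) :
    ∃ l : List (Perm (Fin n)), (∀ x ∈ l, x ∈ ATrans n) ∧
      l.length = nontrivialCount f m ∧ l.prod = prefixProd f m := by
  induction m, hm using Nat.le_induction with
  | base => exact ⟨[], by simp, (nontrivialCount_two f).symm, (prefixProd_two f).symm⟩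
  | succ m hm ih =>
    obtain ⟨l, hl, hlen, hprod⟩ := ih (by omega)
    rw [nontrivialCount_succ f hm, prefixProd_succ f hm, ← hprod]
    by_cases hu1 : f (m + 1) = 1
    · exact ⟨l, hl, by simp [hu1, hlen], by simp [hu1]⟩
    · refine ⟨l ++ [f (m + 1)], fun x hx ↦ ?_, by simp [hu1, hlen], by rw [List.prod_append, List.prod_singleton]⟩
      obtain hx | hx := List.mem_append.mp hx
      · exact hl x hx
      · exact List.mem_singleton.mp hx ▸ mem_ATrans_of_mem_Rset (hf _ (by omega) hmn) hu1

lemma cycleRankSum_prefixProd (h1 : 1 < n) {m : ℕ} (hm : 2 ≤ m) (hmn : m ≤ n) :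
    cycleRankSum (swap (⟨0, by omega⟩ : Fin n) ⟨1, h1⟩) (prefixProd f m) +
      2 * nontrivialCount f m + 1 = 2 * n := by
  induction m, hm using Nat.le_induction with
  | base =>
    rw [prefixProd_two, nontrivialCount_two, cycleRankSum_one (by simp [Fin.ext_iff]),
      Fintype.card_fin]
  | succ m hm ih =>
    have ih := ih (by omega)
    rw [nontrivialCount_succ f hm, prefixProd_succ f hm]
    by_cases hu1 : f (m + 1) = 1
    · simpa [hu1] using ih
    · have hstep := cycleRankSum_mul_of_mem_Rset h1 (by omega) (hf _ (by omega) hmn) hu1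
        (x := prefixProd f m) fun y hy ↦ prefixProd_apply_of_le hf hm (by omega)
      rw [if_neg hu1]
      omega

end Alternating

theorem stmt_3_general (n : ℕ) (hn : 3 ≤ n) (v : Equiv.Perm (Fin n))
    (f : ℕ → Equiv.Perm (Fin n))
    (hf : ∀ i, 3 ≤ i → i ≤ n → f i ∈ Rset n i)
    (hprod : (((List.range (n + 1)).drop 3).map f).prod = v) :
    ((Finset.Icc 3 n).filter (fun i => f i ≠ 1)).card = alen n v := by
  have h1 : 1 < n := by omega
  have hcount := cycleRankSum_prefixProd hf h1 (m := n) (by omega) le_rfl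
  refine (alen_eq_of_forall_le ?_ fun l hl hlv ↦ ?_).symm
  · exact hprod ▸ exists_word_prefixProd hf (by omega) le_rfl
  · have hbound := two_mul_card_le_cycleRankSum_prod (by simp [Fin.ext_iff])
      fun t ht ↦ exists_eq_swap_mul_swap_of_mem_ATrans h1 (hl t ht)
    rw [Fintype.card_fin, hlv, ← hprod] at hbound
    rw [prefixProd, nontrivialCount] at hcount
    omega

/-- If `v = v_3 ⋯ v_n` is a canonical presentation of `v ∈ A_n` (with `v_i ∈ R_i`),
then the number of indices `i` with `v_i ≠ e` equals the length of `v` w.r.t. `T(A_n)`. -/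
theorem stmt_3 (n : ℕ) (hn : 3 ≤ n) (v : Equiv.Perm (Fin n))
    (hv : v ∈ alternatingGroup (Fin n))
    (f : ℕ → Equiv.Perm (Fin n))
    (hf : ∀ i, 3 ≤ i → i ≤ n → f i ∈ Rset n i)
    (hprod : (((List.range (n + 1)).drop 3).map f).prod = v) :
    ((Finset.Icc 3 n).filter (fun i => f i ≠ 1)).card = alen n v :=
  stmt_3_general n hn v f hf hprod
end

section
/- For every n ≥ 4 and every m with 1 ≤ m ≤ n-2, the Stirling-type recursion a(n,m) = (n-1)·a(n-1,m-1) + a(n-1,m) holds; moreover a(n,0) = 1 for all n ≥ 0 and a(n,n) = 0 for all n > 0. -/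
/-- `a(n,m)`: the number of elements of `A_n` of length `m` w.r.t. `T(A_n)`. -/
noncomputable def aCount (n m : ℕ) : ℕ :=
  Nat.card {v : Equiv.Perm (Fin n) // v ∈ alternatingGroup (Fin n) ∧ alen n v = m}

/-!
Write `a, b` for the letters `1, 2`. For a permutation `v`, let `W(v)` be the space of rational
functions on the letters that are constant on the cycles of `v` and take the same value at `a`
and `b`; its dimension is the number of blocks of the partition generated by the cycles of `v`
and `{a, b}`. The length of an even `v` is its defect `n - 1 - dim W(v)`.

It is at least the defect because multiplying by a generator `(a b)(i j)` changes `dim W` by at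
most one: `W(v)` and `W((a b)(i j) v)` meet the hyperplane `u i = u j` in the same subspace.
For the converse, write a permutation of the letters together with a new letter `∗` as
`(∗ c) · u` with `u` fixing `∗`: if `c = ∗` the defect does not change, and otherwise it grows
by one, and `(∗ c)(a b)` is a single generator; so words of length equal to the defect exist by
induction on `n`. The same decomposition gives the recursion: `u` is even in the first case and
odd in the other `n - 1` cases, and `u ↦ (a b) u` matches odd and even permutations of equal
defect.
-/

open Equiv Equiv.Perm Module

lemma Submodule.finrank_comap_prod {K M N P : Type*} [Field K] [AddCommGroup M] [Module K M]
    [AddCommGroup N] [Module K N] [AddCommGroup P] [Module K P] [FiniteDimensional K N]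
    [FiniteDimensional K P] (e : M ≃ₗ[K] N × P) (p : Submodule K N) (q : Submodule K P) :
    finrank K ((p.prod q).comap e.toLinearMap) = finrank K p + finrank K q := by
  let f : (p.prod q) ≃ₗ[K] p × q :=
    { toFun x := (⟨x.1.1, x.2.1⟩, ⟨x.1.2, x.2.2⟩)
      invFun y := ⟨(y.1.1, y.2.1), y.1.2, y.2.2⟩
      map_add' _ _ := rfl
      map_smul' _ _ := rfl
      left_inv _ := rfl
      right_inv _ := rfl }
  rw [(e.ofSubmodule' _).finrank_eq, f.finrank_eq, Module.finrank_prod]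

namespace AltLength

section Words

variable {α β : Type*} [DecidableEq α] [DecidableEq β]

def ATransOn (a b : α) : Set (Perm α) :=
  {v | ∃ i j, i ≠ j ∧ v = swap a b * swap i j}

lemma swap_mul_swap_mem_ATransOn {a b x y : α} (hxy : x ≠ y) :
    swap x y * swap a b ∈ ATransOn a b := by
  refine ⟨swap a b x, swap a b y, (swap a b).injective.ne hxy, ?_⟩
  rw [swap_apply_apply, swap_inv, ← mul_assoc, ← mul_assoc, swap_mul_self, one_mul]

lemma permCongr_mem_ATransOn (σ : α ≃ β) {a b : α} {t : Perm α} (ht : t ∈ ATransOn a b) :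
    σ.permCongrHom t ∈ ATransOn (σ a) (σ b) := by
  obtain ⟨i, j, hij, rfl⟩ := ht
  refine ⟨σ i, σ j, σ.injective.ne hij, ?_⟩
  rw [map_mul, permCongrHom_coe, permCongr_def, permCongr_def, symm_trans_swap_trans,
    symm_trans_swap_trans]

def optionCongrHom : Perm α →* Perm (Option α) where
  toFun := optionCongr
  map_one' := optionCongr_one
  map_mul' p q := by
    ext x
    cases x <;> simp

lemma optionCongr_mem_ATransOn {a b : α} {t : Perm α} (ht : t ∈ ATransOn a b) :
    optionCongrHom t ∈ ATransOn (some a) (some b) := by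
  obtain ⟨i, j, hij, rfl⟩ := ht
  refine ⟨some i, some j, Option.some_injective _ |>.ne hij, ?_⟩
  rw [map_mul]
  simp [optionCongrHom]

def HasWordOfLengthLE (a b : α) (v : Perm α) (L : ℕ) : Prop :=
  ∃ l : List (Perm α), (∀ x ∈ l, x ∈ ATransOn a b) ∧ l.length ≤ L ∧ l.prod = v

lemma HasWordOfLengthLE.map {a b : α} {a' b' : β} (φ : Perm α →* Perm β)
    (hφ : ∀ t ∈ ATransOn a b, φ t ∈ ATransOn a' b') {v : Perm α} {L : ℕ}
    (h : HasWordOfLengthLE a b v L) : HasWordOfLengthLE a' b' (φ v) L := by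
  obtain ⟨l, hl, hlen, rfl⟩ := h
  refine ⟨l.map φ, ?_, by simpa using hlen, (map_list_prod φ l).symm⟩
  simp only [List.mem_map]
  rintro _ ⟨t, ht, rfl⟩
  exact hφ t (hl t ht)

lemma HasWordOfLengthLE.gen_mul {a b : α} {v g : Perm α} {L : ℕ}
    (h : HasWordOfLengthLE a b v L) (hg : g ∈ ATransOn a b) :
    HasWordOfLengthLE a b (g * v) (L + 1) := by
  obtain ⟨l, hl, hlen, rfl⟩ := h
  refine ⟨g :: l, ?_, by simpa using hlen, List.prod_cons⟩
  simp only [List.mem_cons, forall_eq_or_imp]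
  exact ⟨hg, hl⟩

lemma HasWordOfLengthLE.eq_one {a b : α} {v : Perm α} (h : HasWordOfLengthLE a b v 0) :
    v = 1 := by
  obtain ⟨l, -, hlen, rfl⟩ := h
  rw [List.length_eq_zero_iff.1 (Nat.le_zero.1 hlen), List.prod_nil]

lemma hasWordOfLengthLE_permCongr_iff (σ : α ≃ β) {a b : α} {v : Perm α} {L : ℕ} :
    HasWordOfLengthLE (σ a) (σ b) (σ.permCongr v) L ↔ HasWordOfLengthLE a b v L := by
  refine ⟨fun h => ?_, fun h => h.map σ.permCongrHom.toMonoidHom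
    fun t ht => permCongr_mem_ATransOn σ ht⟩
  have := h.map σ.symm.permCongrHom.toMonoidHom fun t ht => permCongr_mem_ATransOn σ.symm ht
  simpa [permCongrHom_coe, ← permCongr_symm] using this

lemma apply_swap_of_apply_eq {γ : Type*} {u : α → γ} {i j : α} (h : u i = u j) (x : α) :
    u (swap i j x) = u x := by
  rcases eq_or_ne x i with rfl | hxi
  · rw [swap_apply_left, h]
  rcases eq_or_ne x j with rfl | hxj
  · rw [swap_apply_right, h]
  · rw [swap_apply_of_ne_of_ne hxi hxj]

end Words

section Invariants

variable {α : Type*}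

def invariantFns (a b : α) (v : Perm α) : Submodule ℚ (α → ℚ) where
  carrier := {u | (∀ x, u (v x) = u x) ∧ u a = u b}
  add_mem' hu hw := ⟨fun x => by simp [hu.1 x, hw.1 x], by simp [hu.2, hw.2]⟩
  zero_mem' := ⟨fun _ => rfl, rfl⟩
  smul_mem' c _ hu := ⟨fun x => by simp [hu.1 x], by simp [hu.2]⟩

variable {a b : α} {v : Perm α}

lemma mem_invariantFns {u : α → ℚ} :
    u ∈ invariantFns a b v ↔ (∀ x, u (v x) = u x) ∧ u a = u b :=
  Iff.rfl

lemma invariantFns_le_one : invariantFns a b v ≤ invariantFns a b 1 :=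
  fun _ hu => ⟨fun _ => rfl, hu.2⟩

lemma invariantFns_one_eq_ker : invariantFns a b 1 =
    LinearMap.ker ((LinearMap.proj a : (α → ℚ) →ₗ[ℚ] ℚ) - LinearMap.proj b) := by
  ext u
  simp [mem_invariantFns, sub_eq_zero]

lemma invariantFns_permCongr {β : Type*} (σ : α ≃ β) :
    invariantFns (σ a) (σ b) (σ.permCongr v) =
      (invariantFns a b v).comap (LinearEquiv.funCongrLeft ℚ ℚ σ).toLinearMap := by
  ext u
  simp only [mem_invariantFns, Submodule.mem_comap, LinearEquiv.coe_coe,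
    LinearEquiv.funCongrLeft_apply, LinearMap.funLeft_apply, permCongr_apply,
    σ.forall_congr_left, σ.apply_symm_apply]

section Finrank

variable [Fintype α]

lemma finrank_invariantFns_one (hab : a ≠ b) :
    finrank ℚ (invariantFns a b 1) = Fintype.card α - 1 := by
  have hf : ((LinearMap.proj a : Module.Dual ℚ (α → ℚ)) - LinearMap.proj b) ≠ 0 := by
    classical
    intro h
    simpa [hab.symm] using LinearMap.congr_fun h (Pi.single a 1)
  have := Module.Dual.finrank_ker_add_one_of_ne_zero hf
  rw [Module.finrank_fintype_fun_eq_card] at this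
  rw [invariantFns_one_eq_ker]
  omega

lemma finrank_invariantFns_le (hab : a ≠ b) :
    finrank ℚ (invariantFns a b v) ≤ Fintype.card α - 1 :=
  finrank_invariantFns_one hab ▸ Submodule.finrank_mono invariantFns_le_one

lemma one_le_finrank_invariantFns : 1 ≤ finrank ℚ (invariantFns a b v) := by
  have hconst : (1 : α → ℚ) ∈ invariantFns a b v := ⟨fun _ => rfl, rfl⟩
  have : Nonempty α := ⟨a⟩
  have : Nontrivial (invariantFns a b v) :=
    ⟨⟨⟨1, hconst⟩, 0, by simp [Subtype.ext_iff, Pi.one_def, funext_iff]⟩⟩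
  exact Module.finrank_pos

lemma finrank_le_finrank_inf_invariantFns_one_add_one (p : Submodule ℚ (α → ℚ)) {i j : α}
    (hij : i ≠ j) :
    finrank ℚ p ≤ finrank ℚ (p ⊓ invariantFns i j 1 : Submodule ℚ _) + 1 := by
  have hsum := Submodule.finrank_sup_add_finrank_inf_eq p (invariantFns i j 1)
  have hsup := Submodule.finrank_le (p ⊔ invariantFns i j 1)
  rw [Module.finrank_fintype_fun_eq_card] at hsup
  have := finrank_invariantFns_one hij
  omega

end Finrank

variable [DecidableEq α]

lemma invariantFns_swap_mul : invariantFns a b (swap a b * v) = invariantFns a b v := by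
  ext u
  simp only [mem_invariantFns, Perm.mul_apply, and_congr_left_iff]
  intro hab
  simp only [apply_swap_of_apply_eq hab]

lemma invariantFns_gen_mul_inf {i j : α} :
    invariantFns a b (swap a b * swap i j * v) ⊓ invariantFns i j 1 =
      invariantFns a b v ⊓ invariantFns i j 1 := by
  ext u
  simp only [Submodule.mem_inf, mem_invariantFns, Perm.mul_apply]
  constructor <;> rintro ⟨⟨h, hab⟩, -, hij⟩ <;>
    refine ⟨⟨fun x => ?_, hab⟩, fun _ => rfl, hij⟩
  · simpa [apply_swap_of_apply_eq hab, apply_swap_of_apply_eq hij] using h x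
  · simp [apply_swap_of_apply_eq hab, apply_swap_of_apply_eq hij, h x]

end Invariants

section OptionInvariants

variable {α : Type*}

def optionShear (i : α) : (Option α → ℚ) ≃ₗ[ℚ] (α → ℚ) × ℚ :=
  (LinearEquiv.piOptionEquivProd ℚ).trans <| (LinearEquiv.prodComm ℚ _ _).trans <|
    (LinearEquiv.refl ℚ _).skewProd (LinearEquiv.refl ℚ ℚ) (-LinearMap.proj i)

@[simp]
lemma optionShear_apply (i : α) (U : Option α → ℚ) :
    optionShear i U = (fun x => U (some x), U none - U (some i)) := by
  simp only [optionShear, LinearEquiv.trans_apply, LinearEquiv.skewProd_apply]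
  exact Prod.ext rfl (sub_eq_add_neg _ _).symm

variable {a b : α} (u : Perm α) (i : α)

lemma invariantFns_optionCongr :
    invariantFns (some a) (some b) (optionCongr u) =
      ((invariantFns a b u).prod ⊤).comap (optionShear i).toLinearMap := by
  ext U
  simp [mem_invariantFns, Option.forall]

variable [DecidableEq α]

lemma invariantFns_swap_none_mul_optionCongr :
    invariantFns (some a) (some b) (swap none (some i) * optionCongr u) =
      ((invariantFns a b u).prod ⊥).comap (optionShear i).toLinearMap := by
  ext U
  simp only [mem_invariantFns, Submodule.mem_comap, LinearEquiv.coe_coe, optionShear_apply,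
    Submodule.mem_prod, Submodule.mem_bot, sub_eq_zero, Perm.mul_apply]
  constructor
  · rintro ⟨h, hab⟩
    have hi : U none = U (some i) := by simpa using (h none).symm
    refine ⟨⟨fun x => ?_, hab⟩, hi⟩
    simpa [apply_swap_of_apply_eq hi] using h (some x)
  · rintro ⟨⟨h, hab⟩, hi⟩
    refine ⟨fun z => ?_, hab⟩
    cases z <;> simp [apply_swap_of_apply_eq hi, h, hi]

end OptionInvariants

section Defect

variable {α β : Type*} [Fintype α] {a b : α}

noncomputable def defect (a b : α) (v : Perm α) : ℕ :=
  Fintype.card α - 1 - finrank ℚ (invariantFns a b v)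

lemma defect_one (hab : a ≠ b) : defect a b 1 = 0 := by
  simp [defect, finrank_invariantFns_one hab]

lemma defect_le_card_sub_two (v : Perm α) : defect a b v ≤ Fintype.card α - 2 := by
  have := one_le_finrank_invariantFns (a := a) (b := b) (v := v)
  unfold defect
  omega

lemma defect_permCongr [Fintype β] (σ : α ≃ β) (v : Perm α) :
    defect (σ a) (σ b) (σ.permCongr v) = defect a b v := by
  rw [defect, defect, invariantFns_permCongr, (LinearEquiv.ofSubmodule' _ _).finrank_eq,
    Fintype.card_congr σ]

lemma defect_optionCongr (hab : a ≠ b) (u : Perm α) :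
    defect (some a) (some b) (optionCongr u) = defect a b u := by
  rw [defect, defect, invariantFns_optionCongr u a, Submodule.finrank_comap_prod, finrank_top,
    finrank_self, Fintype.card_option]
  have := finrank_invariantFns_le hab (v := u)
  omega

variable [DecidableEq α]

lemma defect_swap_mul (v : Perm α) : defect a b (swap a b * v) = defect a b v := by
  rw [defect, defect, invariantFns_swap_mul]

lemma defect_gen_mul_le (hab : a ≠ b) {t : Perm α} (ht : t ∈ ATransOn a b) (v : Perm α) :
    defect a b (t * v) ≤ defect a b v + 1 := by
  obtain ⟨i, j, hij, rfl⟩ := ht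
  have hcodim := finrank_le_finrank_inf_invariantFns_one_add_one (invariantFns a b v) hij
  rw [← invariantFns_gen_mul_inf] at hcodim
  have hinf := Submodule.finrank_mono
    (inf_le_left : invariantFns a b (swap a b * swap i j * v) ⊓ invariantFns i j 1 ≤ _)
  have := finrank_invariantFns_le hab (v := v)
  unfold defect
  omega

lemma HasWordOfLengthLE.defect_le (hab : a ≠ b) {v : Perm α} {L : ℕ}
    (h : HasWordOfLengthLE a b v L) : defect a b v ≤ L := by
  obtain ⟨l, hl, hlen, rfl⟩ := h
  refine le_trans ?_ hlen
  clear hlen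
  induction l with
  | nil => simp [defect_one hab]
  | cons t l ih =>
    simp only [List.mem_cons, forall_eq_or_imp] at hl
    rw [List.prod_cons, List.length_cons]
    exact (defect_gen_mul_le hab hl.1 _).trans (Nat.add_le_add_right (ih hl.2) 1)

lemma defect_swap_none_mul_optionCongr (hab : a ≠ b) (u : Perm α) (i : α) :
    defect (some a) (some b) (swap none (some i) * optionCongr u) = defect a b u + 1 := by
  rw [defect, defect, invariantFns_swap_none_mul_optionCongr, Submodule.finrank_comap_prod,
    finrank_bot, Fintype.card_option]
  have := finrank_invariantFns_le hab (v := u)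
  have := one_le_finrank_invariantFns (a := a) (b := b) (v := u)
  omega

end Defect

section Length

variable {α : Type*} [DecidableEq α] [Fintype α] {a b : α}

lemma hasWordOfLengthLE_defect_option (hab : a ≠ b)
    (ih : ∀ u : Perm α, sign u = 1 → HasWordOfLengthLE a b u (defect a b u))
    (w : Perm (Option α)) (hw : sign w = 1) :
    HasWordOfLengthLE (some a) (some b) w (defect (some a) (some b) w) := by
  have hmap : ∀ t ∈ ATransOn a b, optionCongrHom t ∈ ATransOn (some a) (some b) :=
    fun _ => optionCongr_mem_ATransOn
  obtain ⟨⟨_ | i, u⟩, rfl⟩ := decomposeOption.symm.surjective w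
  · have hw_eq : decomposeOption.symm (none, u) = optionCongr u :=
      Equiv.ext fun x => by simp
    rw [hw_eq, optionCongr_sign] at hw
    rw [hw_eq, defect_optionCongr hab]
    exact (ih u hw).map optionCongrHom hmap
  · simp only [decomposeOption_symm_apply] at hw ⊢
    have hu : sign u = -1 := by
      simpa [Perm.sign_mul, sign_swap, neg_eq_iff_eq_neg] using hw
    set u' := swap a b * u with hu'
    have hu'_sign : sign u' = 1 := by
      simp [hu', Perm.sign_mul, sign_swap hab, hu]
    have hu_eq : u = swap a b * u' := (swap_mul_self_mul a b u).symm
    have hw_eq : swap none (some i) * optionCongr u =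
        swap none (some i) * swap (some a) (some b) * optionCongrHom u' := by
      rw [hu_eq, mul_assoc, ← optionCongr_swap]
      exact congrArg _ (map_mul optionCongrHom _ _)
    rw [defect_swap_none_mul_optionCongr hab, hu_eq, defect_swap_mul, ← hu_eq, hw_eq]
    exact ((ih u' hu'_sign).map optionCongrHom hmap).gen_mul
      (swap_mul_swap_mem_ATransOn (Option.some_ne_none i).symm)

end Length

section Counting

variable {α β : Type*} [DecidableEq α] [Fintype α] [DecidableEq β] [Fintype β] {a b : α}

noncomputable def evenCount (a b : α) (m : ℕ) : ℕ :=
  Nat.card {v : Perm α // sign v = 1 ∧ defect a b v = m}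

lemma evenCount_permCongr (σ : α ≃ β) (m : ℕ) : evenCount (σ a) (σ b) m = evenCount a b m :=
  Nat.card_congr <| (σ.permCongr.subtypeEquiv fun v => by
    rw [sign_permCongr, defect_permCongr]).symm

lemma card_sign_neg_one_eq_evenCount (hab : a ≠ b) (m : ℕ) :
    Nat.card {v : Perm α // sign v = -1 ∧ defect a b v = m} = evenCount a b m :=
  Nat.card_congr <| (Equiv.mulLeft (swap a b)).subtypeEquiv fun v => by
    simp [Perm.sign_mul, sign_swap hab, defect_swap_mul, neg_eq_iff_eq_neg]

lemma card_subtype_perm_option (P : Perm (Option α) → Prop) :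
    Nat.card {w // P w} =
      ∑ o : Option α, Nat.card {u : Perm α // P (decomposeOption.symm (o, u))} := by
  rw [← Nat.card_sigma]
  exact Nat.card_congr <| (decomposeOption.symm.subtypeEquiv fun _ => Iff.rfl).symm.trans
    (subtypeProdEquivSigmaSubtype fun o u => P (decomposeOption.symm (o, u)))

lemma evenCount_option (hab : a ≠ b) {m : ℕ} (hm : 1 ≤ m) :
    evenCount (some a) (some b) m =
      Fintype.card α * evenCount a b (m - 1) + evenCount a b m := by
  rw [evenCount, card_subtype_perm_option, Fintype.sum_option, add_comm]
  congr 1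
  · rw [← card_sign_neg_one_eq_evenCount hab, ← smul_eq_mul, ← Finset.card_univ, ← Finset.sum_const]
    refine Finset.sum_congr rfl fun i _ => Nat.card_congr <| Equiv.subtypeEquivRight fun u => ?_
    simp only [decomposeOption_symm_apply, Perm.sign_mul, optionCongr_sign,
      sign_swap (Option.some_ne_none i).symm, defect_swap_none_mul_optionCongr hab, neg_mul,
      one_mul, neg_eq_iff_eq_neg]
    exact and_congr_right' (by omega)
  · refine Nat.card_congr <| Equiv.subtypeEquivRight fun u => ?_
    have hu : decomposeOption.symm (none, u) = optionCongr u := Equiv.ext fun x => by simp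
    rw [hu, optionCongr_sign, defect_optionCongr hab]

end Counting

section Fin

lemma finSuccEquivLast_zero (n : ℕ) :
    (finSuccEquivLast : Fin (n + 3) ≃ Option (Fin (n + 2))) 0 = some 0 := by
  simpa using finSuccEquivLast_castSucc (0 : Fin (n + 2))

lemma finSuccEquivLast_one (n : ℕ) :
    (finSuccEquivLast : Fin (n + 3) ≃ Option (Fin (n + 2))) 1 = some 1 := by
  simpa using finSuccEquivLast_castSucc (1 : Fin (n + 2))

lemma ATrans_eq_ATransOn (k : ℕ) : ATrans (k + 2) = ATransOn (0 : Fin (k + 2)) 1 := by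
  ext v
  constructor
  · rintro ⟨-, i, j, hij, rfl⟩
    exact ⟨i, j, hij.ne, rfl⟩
  · rintro ⟨i, j, hij, rfl⟩
    rcases hij.lt_or_gt with h | h
    · exact ⟨by omega, i, j, h, rfl⟩
    · exact ⟨by omega, j, i, h, by rw [swap_comm j i]; rfl⟩

lemma hasWordOfLengthLE_defect_fin (n : ℕ) (v : Perm (Fin (n + 2))) (hv : sign v = 1) :
    HasWordOfLengthLE 0 1 v (defect 0 1 v) := by
  induction n with
  | zero =>
    obtain rfl : v = 1 := (by decide : ∀ v : Perm (Fin 2), sign v = 1 → v = 1) v hv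
    rw [defect_one Fin.zero_ne_one]
    exact ⟨[], by simp, le_rfl, rfl⟩
  | succ n ih =>
    rw [← hasWordOfLengthLE_permCongr_iff finSuccEquivLast, ← defect_permCongr finSuccEquivLast,
      finSuccEquivLast_zero, finSuccEquivLast_one]
    exact hasWordOfLengthLE_defect_option Fin.zero_ne_one ih _ (by rwa [sign_permCongr])

lemma alen_eq_defect {k : ℕ} (v : Perm (Fin (k + 2))) (hv : sign v = 1) :
    alen (k + 2) v = defect 0 1 v := by
  obtain ⟨l, hl, hlen, hprod⟩ := hasWordOfLengthLE_defect_fin k v hv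
  rw [alen, ATrans_eq_ATransOn]
  apply le_antisymm
  · refine (Nat.sInf_le ?_).trans hlen
    exact ⟨l, hl, rfl, hprod⟩
  · refine le_csInf ⟨_, l, hl, rfl, hprod⟩ ?_
    rintro _ ⟨l', hl', rfl, rfl⟩
    exact HasWordOfLengthLE.defect_le Fin.zero_ne_one ⟨l', hl', le_rfl, rfl⟩

lemma aCount_eq_evenCount (k m : ℕ) : aCount (k + 2) m = evenCount (0 : Fin (k + 2)) 1 m :=
  Nat.card_congr <| Equiv.subtypeEquivRight fun v => by
    rw [mem_alternatingGroup]
    exact and_congr_right fun hv => by rw [alen_eq_defect v hv]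

lemma aCount_add_three (k : ℕ) {m : ℕ} (hm : 1 ≤ m) :
    aCount (k + 3) m = (k + 2) * aCount (k + 2) (m - 1) + aCount (k + 2) m := by
  rw [aCount_eq_evenCount, aCount_eq_evenCount, aCount_eq_evenCount,
    ← evenCount_permCongr finSuccEquivLast, finSuccEquivLast_zero, finSuccEquivLast_one,
    evenCount_option Fin.zero_ne_one hm, Fintype.card_fin]

lemma alen_one (n : ℕ) : alen n 1 = 0 :=
  Nat.sInf_eq_zero.2 <| Or.inl ⟨[], by simp, rfl, rfl⟩

lemma aCount_zero (n : ℕ) : aCount n 0 = 1 := by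
  rw [aCount, Nat.card_eq_one_iff_unique]
  refine ⟨⟨fun ⟨v, hv⟩ ⟨w, hw⟩ => Subtype.ext ?_⟩, ⟨⟨1, one_mem _, alen_one n⟩⟩⟩
  rcases lt_or_ge n 2 with hn | hn
  · have := Fin.subsingleton_iff_le_one.2 (Nat.le_of_lt_succ hn)
    exact Subsingleton.elim v w
  · obtain ⟨k, rfl⟩ := Nat.exists_eq_add_of_le' hn
    have eq_one : ∀ v : Perm (Fin (k + 2)),
        v ∈ alternatingGroup _ ∧ alen (k + 2) v = 0 → v = 1 := by
      rintro v ⟨hv, hlen⟩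
      rw [mem_alternatingGroup] at hv
      rw [alen_eq_defect v hv] at hlen
      exact (hlen ▸ hasWordOfLengthLE_defect_fin k v hv).eq_one
    exact (eq_one v hv).trans (eq_one w hw).symm

lemma aCount_self {n : ℕ} (hn : 0 < n) : aCount n n = 0 := by
  rw [aCount, Nat.card_eq_zero]
  refine Or.inl ⟨fun ⟨v, hv, hlen⟩ => ?_⟩
  rcases lt_or_ge n 2 with hn2 | hn2
  · have := Fin.subsingleton_iff_le_one.2 (Nat.le_of_lt_succ hn2)
    rw [Subsingleton.elim v 1, alen_one] at hlen
    omega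
  · obtain ⟨k, rfl⟩ := Nat.exists_eq_add_of_le' hn2
    rw [mem_alternatingGroup] at hv
    have := defect_le_card_sub_two (a := (0 : Fin (k + 2))) (b := 1) v
    rw [← alen_eq_defect v hv, hlen, Fintype.card_fin] at this
    omega

end Fin

end AltLength

/-- The Stirling-type recursion `a(n,m) = (n-1)·a(n-1,m-1) + a(n-1,m)` for `n ≥ 4`,
`1 ≤ m ≤ n-2`, together with the boundary conditions `a(n,0) = 1` (`n ≥ 0`) and
`a(n,n) = 0` (`n > 0`). -/
theorem stmt_6 :
    (∀ n m : ℕ, 4 ≤ n → 1 ≤ m → m ≤ n - 2 →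
      aCount n m = (n - 1) * aCount (n - 1) (m - 1) + aCount (n - 1) m) ∧
    (∀ n : ℕ, aCount n 0 = 1) ∧
    (∀ n : ℕ, 0 < n → aCount n n = 0) := by
  refine ⟨fun n m hn hm _ => ?_, AltLength.aCount_zero, fun n => AltLength.aCount_self⟩
  obtain ⟨k, rfl⟩ := Nat.exists_eq_add_of_le' (by omega : 3 ≤ n)
  simpa using AltLength.aCount_add_three k hm
end

section
/- For every n ≥ 2 and every v ∈ A_n, the letters 1 and 2 lie in the same cycle of v (i.e., some power of v maps 1 to 2) if and only if ℓ(v) is odd. -/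
/-!
Let `t = (1 2)` and let `r σ` be the least number of transpositions with product `σ`. The
transpositions form a conjugation-invariant set `S`, so a product of `k` elements of
`T(A_n) = t • S` is `t ^ k` times a product of `k` transpositions. As `t` is an involution and
`r σ` has the parity of `σ`, for even `v` this gives `ℓ(v) = min (r v) (r (t v))`, with `r v`
even and `r (t v)` odd. Realising `r σ` as the rank of `σ - 1` on `ℚ^n` makes it subadditive,
and multiplying by `swap a b` lowers it when `a, b` lie in one cycle of `σ` (the cycle splits,
so the space of `σ`-invariant functions grows) and raises it otherwise (two cycles merge).
Hence `ℓ(v)` is odd iff `r (t v) < r v`, iff `1` and `2` lie in the same cycle of `v`.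
-/

open Module Pointwise

namespace Set

theorem mem_pow_iff_exists_list {M : Type*} [Monoid M] {s : Set M} {k : ℕ} {x : M} :
    x ∈ s ^ k ↔ ∃ l : List M, (∀ y ∈ l, y ∈ s) ∧ l.length = k ∧ l.prod = x := by
  induction k generalizing x with
  | zero => simp [eq_comm]
  | succ k ih =>
    simp_rw [pow_succ', mem_mul, ih]
    constructor
    · rintro ⟨y, hy, _, ⟨l, hl, rfl, rfl⟩, rfl⟩
      exact ⟨y :: l, List.forall_mem_cons.mpr ⟨hy, hl⟩, rfl, rfl⟩
    · rintro ⟨_ | ⟨y, l⟩, hl, hlen, rfl⟩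
      · simp at hlen
      · simp only [List.mem_cons, forall_eq_or_imp] at hl
        exact ⟨y, hl.1, l.prod, ⟨l, hl.2, by simpa using hlen, rfl⟩, rfl⟩

variable {G : Type*} [Group G] {S : Set G}

theorem op_smul_eq_smul_of_conj_mem (hS : ∀ u : G, ∀ s ∈ S, u * s * u⁻¹ ∈ S) (u : G) :
    MulOpposite.op u • S = u • S := by
  ext x
  rw [mem_smul_set_iff_inv_smul_mem, mem_smul_set_iff_inv_smul_mem, MulOpposite.smul_eq_mul_unop,
    MulOpposite.unop_inv, MulOpposite.unop_op, smul_eq_mul]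
  exact ⟨fun hx => by simpa [mul_assoc] using hS u⁻¹ _ hx,
    fun hx => by simpa [mul_assoc] using hS u _ hx⟩

theorem smul_pow_of_conj_mem (hS : ∀ u : G, ∀ s ∈ S, u * s * u⁻¹ ∈ S) (t : G) (k : ℕ) :
    (t • S) ^ k = t ^ k • S ^ k := by
  induction k with
  | zero => simp
  | succ k ih =>
    rw [pow_succ', ih, smul_mul_assoc, ← op_smul_set_mul_eq_mul_smul_set,
      op_smul_eq_smul_of_conj_mem hS, smul_mul_assoc, smul_smul, ← pow_succ', ← pow_succ']

end Set

namespace Equiv.Perm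

variable {α : Type*}

section Rank

noncomputable def precompSubId (σ : Perm α) : (α → ℚ) →ₗ[ℚ] (α → ℚ) :=
  LinearMap.funLeft ℚ ℚ σ - LinearMap.id

/-- The rank of `σ - 1` acting on `α → ℚ`; by `mem_isSwap_pow_swapRank` and
`swapRank_le_of_mem_isSwap_pow` it is the least number of transpositions with product `σ`. -/
noncomputable def swapRank (σ : Perm α) : ℕ :=
  finrank ℚ (LinearMap.range σ.precompSubId)

theorem precompSubId_apply (σ : Perm α) (g : α → ℚ) (x : α) :
    σ.precompSubId g x = g (σ x) - g x := rfl

theorem mem_ker_precompSubId {σ : Perm α} {g : α → ℚ} :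
    g ∈ LinearMap.ker σ.precompSubId ↔ ∀ x, g (σ x) = g x := by
  simp only [LinearMap.mem_ker, funext_iff, precompSubId_apply, Pi.zero_apply, sub_eq_zero]

theorem precompSubId_mul (σ τ : Perm α) :
    (σ * τ).precompSubId =
      (LinearMap.funLeft ℚ ℚ τ).comp σ.precompSubId + τ.precompSubId := by
  ext g x
  simp [precompSubId_apply, LinearMap.funLeft_apply]

@[simp]
theorem swapRank_one : swapRank (1 : Perm α) = 0 := by
  have : (1 : Perm α).precompSubId = 0 := by ext g x; simp [precompSubId_apply]
  rw [swapRank, this, LinearMap.range_zero, finrank_bot]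

theorem SameCycle.apply_eq_of_forall_apply_eq {β : Type*} {σ : Perm α} {g : α → β}
    (hg : ∀ x, g (σ x) = g x) {x y : α} (h : σ.SameCycle x y) : g x = g y := by
  obtain ⟨i, rfl⟩ := h
  suffices ∀ x, g ((σ ^ i) x) = g x from (this x).symm
  induction i using Int.induction_on with
  | zero => simp
  | succ i ih => intro x; rw [zpow_add_one, mul_apply, ih, hg]
  | pred i ih => intro x; rw [zpow_sub_one, mul_apply, ih]; simpa using (hg (σ⁻¹ x)).symm

variable [Fintype α]

theorem swapRank_mul_le (σ τ : Perm α) : swapRank (σ * τ) ≤ swapRank σ + swapRank τ := by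
  calc swapRank (σ * τ)
      ≤ finrank ℚ ↥(LinearMap.range ((LinearMap.funLeft ℚ ℚ τ).comp σ.precompSubId) ⊔
          LinearMap.range τ.precompSubId) := by
        rw [swapRank, precompSubId_mul]
        exact Submodule.finrank_mono (LinearMap.range_add_le _ _)
    _ ≤ finrank ℚ ↥(LinearMap.range ((LinearMap.funLeft ℚ ℚ τ).comp σ.precompSubId)) +
          swapRank τ := Submodule.finrank_add_le_finrank_add_finrank _ _
    _ ≤ swapRank σ + swapRank τ := by
        rw [LinearMap.range_comp]
        gcongr
        exact Submodule.finrank_map_le _ _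

theorem swapRank_lt_of_ker_lt {σ τ : Perm α}
    (h : LinearMap.ker σ.precompSubId < LinearMap.ker τ.precompSubId) :
    swapRank τ < swapRank σ := by
  have hσ := LinearMap.finrank_range_add_finrank_ker σ.precompSubId
  have hτ := LinearMap.finrank_range_add_finrank_ker τ.precompSubId
  have := Submodule.finrank_lt_finrank_of_lt h
  rw [swapRank, swapRank]
  omega

end Rank

variable [DecidableEq α] {a b : α} {σ : Perm α}

theorem swapRank_swap_le_one (a b : α) : swapRank (swap a b) ≤ 1 := by
  have hrange : LinearMap.range (swap a b).precompSubId ≤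
      Submodule.span ℚ {(Pi.single a 1 - Pi.single b 1 : α → ℚ)} := by
    rintro _ ⟨g, rfl⟩
    refine Submodule.mem_span_singleton.mpr ⟨g b - g a, funext fun x => ?_⟩
    simp only [precompSubId_apply, swap_apply_def, Pi.single_apply, Pi.smul_apply, Pi.sub_apply,
      smul_eq_mul]
    split_ifs <;> subst_vars <;> ring
  calc swapRank (swap a b) ≤ _ := Submodule.finrank_mono hrange
    _ ≤ 1 := by
      simpa using finrank_span_le_card ({Pi.single a 1 - Pi.single b 1} : Set (α → ℚ))

theorem IsSwap.conj {s : Perm α} (hs : s.IsSwap) (u : Perm α) :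
    (u * s * u⁻¹).IsSwap := by
  obtain ⟨x, y, hxy, rfl⟩ := hs
  exact ⟨u x, u y, u.injective.ne hxy, (swap_apply_apply u x y).symm⟩

theorem swap_pow_of_even {k : ℕ} (hk : Even k) : swap a b ^ k = 1 := by
  obtain ⟨j, rfl⟩ := hk
  rw [← two_mul, pow_mul, sq, swap_mul_self, one_pow]

theorem swap_pow_of_odd {k : ℕ} (hk : Odd k) : swap a b ^ k = swap a b := by
  obtain ⟨j, rfl⟩ := hk
  rw [pow_succ, swap_pow_of_even (even_two_mul j), one_mul]

theorem mem_swap_smul_isSwap_pow_iff (k : ℕ) :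
    σ ∈ (swap a b • {τ : Perm α | τ.IsSwap}) ^ k ↔
      swap a b ^ k * σ ∈ {τ : Perm α | τ.IsSwap} ^ k := by
  rw [Set.smul_pow_of_conj_mem (fun u s hs => hs.conj u), Set.mem_smul_set_iff_inv_smul_mem,
    ← inv_pow, swap_inv, smul_eq_mul]

section Cycles

theorem swap_mul_pow_succ_apply {m : ℕ}
    (hm : ∀ i, 0 < i → i < m → (σ ^ i) a ≠ a ∧ (σ ^ i) a ≠ b) {j : ℕ} (hj : j < m) :
    ((swap a b * σ) ^ (j + 1)) a = swap a b ((σ ^ (j + 1)) a) := by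
  induction j with
  | zero => rfl
  | succ j ih =>
    obtain ⟨hja, hjb⟩ := hm (j + 1) j.succ_pos (by omega)
    rw [pow_succ', mul_apply, ih (by omega), swap_apply_of_ne_of_ne hja hjb, mul_apply,
      ← mul_apply σ, ← pow_succ']

variable [Finite α]

theorem sameCycle_swap_mul_of_not_sameCycle (h : ¬σ.SameCycle a b) :
    (swap a b * σ).SameCycle a b := by
  have hex : ∃ k, 0 < k ∧ (σ ^ k) a = a := ⟨orderOf σ, orderOf_pos σ, by simp⟩
  obtain ⟨hk, hka⟩ := Nat.find_spec hex
  have hm : ∀ i, 0 < i → i < Nat.find hex → (σ ^ i) a ≠ a ∧ (σ ^ i) a ≠ b :=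
    fun i hi hik => ⟨fun hia => Nat.find_min hex hik ⟨hi, hia⟩,
      fun hib => h ⟨i, by simpa using hib⟩⟩
  refine ⟨Nat.find hex, ?_⟩
  obtain ⟨j, hj⟩ := Nat.exists_eq_add_one_of_ne_zero hk.ne'
  rw [zpow_natCast, hj, swap_mul_pow_succ_apply hm (by omega), ← hj, hka, swap_apply_left]

theorem SameCycle.not_sameCycle_swap_mul (h : σ.SameCycle a b) (hab : a ≠ b) :
    ¬(swap a b * σ).SameCycle a b := by
  have hex : ∃ m, (σ ^ m) a = b := h.exists_pow_eq'.imp fun _ => And.right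
  set m := Nat.find hex
  have hmb : (σ ^ m) a = b := Nat.find_spec hex
  have hm : ∀ i, 0 < i → i < m → (σ ^ i) a ≠ a ∧ (σ ^ i) a ≠ b := by
    refine fun i hi him => ⟨fun hia => Nat.find_min hex (Nat.sub_lt (by omega) hi) ?_,
      Nat.find_min hex him⟩
    have := congrArg (σ ^ (m - i)) hia
    rwa [← mul_apply, ← pow_add, Nat.sub_add_cancel him.le, hmb, eq_comm] at this
  have hm0 : m ≠ 0 := fun h0 => hab (by rw [← hmb, h0, pow_zero, one_apply])
  obtain ⟨j, hj⟩ := Nat.exists_eq_add_one_of_ne_zero hm0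
  have hperiod : ((swap a b * σ) ^ m) a = a := by
    rw [hj, swap_mul_pow_succ_apply hm (by omega), ← hj, hmb, swap_apply_right]
  have hne : ∀ i < m, ((swap a b * σ) ^ i) a ≠ b := by
    rintro (_ | i) hi
    · exact hab
    · obtain ⟨hia, hib⟩ := hm (i + 1) i.succ_pos hi
      rwa [swap_mul_pow_succ_apply hm (by omega), swap_apply_of_ne_of_ne hia hib]
  intro hsc
  obtain ⟨i, -, hi⟩ := hsc.exists_pow_eq'
  refine hne (i % m) (Nat.mod_lt _ (by omega)) ?_
  rwa [← Nat.mod_add_div i m, pow_add, pow_mul, mul_apply,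
    pow_apply_eq_self_of_apply_eq_self hperiod] at hi

end Cycles

variable [Fintype α]

theorem SameCycle.swapRank_swap_mul_lt (h : σ.SameCycle a b) (hab : a ≠ b) :
    swapRank (swap a b * σ) < swapRank σ := by
  classical
  apply swapRank_lt_of_ker_lt
  rw [SetLike.lt_iff_le_and_exists]
  constructor
  · intro g hg
    rw [mem_ker_precompSubId] at hg ⊢
    have hgab := h.apply_eq_of_forall_apply_eq hg
    have hswap : ∀ y, g (swap a b y) = g y := fun y => by
      rcases eq_or_ne y a with rfl | hya
      · simp [hgab]
      rcases eq_or_ne y b with rfl | hyb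
      · simp [hgab]
      rw [swap_apply_of_ne_of_ne hya hyb]
    exact fun x => by rw [mul_apply, hswap, hg]
  · -- the indicator of the cycle of `swap a b * σ` through `a`, which no longer contains `b`
    refine ⟨fun x => if (swap a b * σ).SameCycle a x then 1 else 0, ?_, fun hg => ?_⟩
    · exact mem_ker_precompSubId.mpr fun x => by simp only [sameCycle_apply_right]
    · have := h.apply_eq_of_forall_apply_eq (mem_ker_precompSubId.mp hg)
      simp [h.not_sameCycle_swap_mul hab, SameCycle.refl] at this

theorem swapRank_lt_swapRank_swap_mul (h : ¬σ.SameCycle a b) :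
    swapRank σ < swapRank (swap a b * σ) := by
  have hab : a ≠ b := by rintro rfl; exact h (SameCycle.refl _ _)
  simpa using (sameCycle_swap_mul_of_not_sameCycle h).swapRank_swap_mul_lt hab

theorem exists_swapRank_swap_mul_add_one (hσ : σ ≠ 1) :
    ∃ a b, a ≠ b ∧ swapRank (swap a b * σ) + 1 = swapRank σ := by
  obtain ⟨x, hx⟩ : ∃ x, σ x ≠ x := by
    by_contra! h
    exact hσ (Equiv.ext h)
  have hlt := (sameCycle_apply_right.mpr (SameCycle.refl σ x)).swapRank_swap_mul_lt hx.symm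
  have hle := swapRank_mul_le (swap x (σ x)) (swap x (σ x) * σ)
  rw [swap_mul_self_mul] at hle
  have := swapRank_swap_le_one x (σ x)
  exact ⟨x, σ x, hx.symm, by omega⟩

theorem mem_isSwap_pow_swapRank (σ : Perm α) :
    σ ∈ {τ : Perm α | τ.IsSwap} ^ swapRank σ := by
  induction hk : swapRank σ generalizing σ with
  | zero =>
    obtain rfl : σ = 1 := by
      by_contra hσ
      obtain ⟨a, b, -, h⟩ := exists_swapRank_swap_mul_add_one hσ
      omega
    exact Set.mem_one.mpr rfl
  | succ k ih =>
    have hσ : σ ≠ 1 := by rintro rfl; simp at hk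
    obtain ⟨a, b, hab, h⟩ := exists_swapRank_swap_mul_add_one hσ
    rw [pow_succ']
    exact ⟨swap a b, ⟨a, b, hab, rfl⟩, _, ih _ (by omega), swap_mul_self_mul a b σ⟩

theorem swapRank_le_of_mem_isSwap_pow {k : ℕ} (h : σ ∈ {τ : Perm α | τ.IsSwap} ^ k) :
    swapRank σ ≤ k := by
  induction k generalizing σ with
  | zero => simp [Set.mem_one.mp h]
  | succ k ih =>
    rw [pow_succ', Set.mem_mul] at h
    obtain ⟨_, ⟨a, b, -, rfl⟩, τ, hτ, rfl⟩ := h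
    have := swapRank_mul_le (swap a b) τ
    have := swapRank_swap_le_one a b
    have := ih hτ
    omega

theorem sign_eq_neg_one_pow_of_mem_isSwap_pow {k : ℕ}
    (h : σ ∈ {τ : Perm α | τ.IsSwap} ^ k) :
    sign σ = (-1) ^ k := by
  induction k generalizing σ with
  | zero => simp [Set.mem_one.mp h]
  | succ k ih =>
    rw [pow_succ', Set.mem_mul] at h
    obtain ⟨s, hs, τ, hτ, rfl⟩ := h
    rw [map_mul, hs.sign_eq, ih hτ, pow_succ']

theorem mem_alternatingGroup_iff_even_swapRank :
    σ ∈ alternatingGroup α ↔ Even (swapRank σ) := by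
  rw [mem_alternatingGroup, sign_eq_neg_one_pow_of_mem_isSwap_pow (mem_isSwap_pow_swapRank σ),
    neg_one_pow_eq_one_iff_even (by decide)]

theorem odd_swapRank_swap_mul (hab : a ≠ b) (hσ : σ ∈ alternatingGroup α) :
    Odd (swapRank (swap a b * σ)) := by
  rw [← Nat.not_even_iff_odd, ← mem_alternatingGroup_iff_even_swapRank, mem_alternatingGroup,
    map_mul, sign_swap hab, mem_alternatingGroup.mp hσ]
  decide

theorem sInf_mem_swap_smul_isSwap_pow_eq_min (hab : a ≠ b) (hσ : σ ∈ alternatingGroup α) :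
    sInf {k | σ ∈ (swap a b • {τ : Perm α | τ.IsSwap}) ^ k} =
      min (swapRank σ) (swapRank (swap a b * σ)) := by
  have hσ_mem : σ ∈ (swap a b • {τ : Perm α | τ.IsSwap}) ^ swapRank σ := by
    rw [mem_swap_smul_isSwap_pow_iff,
      swap_pow_of_even (mem_alternatingGroup_iff_even_swapRank.mp hσ), one_mul]
    exact mem_isSwap_pow_swapRank σ
  have hswap_mem : σ ∈ (swap a b • {τ : Perm α | τ.IsSwap}) ^ swapRank (swap a b * σ) := by
    rw [mem_swap_smul_isSwap_pow_iff, swap_pow_of_odd (odd_swapRank_swap_mul hab hσ)]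
    exact mem_isSwap_pow_swapRank _
  refine le_antisymm ?_ (le_csInf ⟨_, hσ_mem⟩ fun k hk => ?_)
  · rcases min_choice (swapRank σ) (swapRank (swap a b * σ)) with h | h <;> rw [h]
    exacts [Nat.sInf_le hσ_mem, Nat.sInf_le hswap_mem]
  · change σ ∈ (swap a b • {τ : Perm α | τ.IsSwap}) ^ k at hk
    rw [mem_swap_smul_isSwap_pow_iff] at hk
    rcases Nat.even_or_odd k with hk' | hk'
    · rw [swap_pow_of_even hk', one_mul] at hk
      exact (min_le_left _ _).trans (swapRank_le_of_mem_isSwap_pow hk)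
    · rw [swap_pow_of_odd hk'] at hk
      exact (min_le_right _ _).trans (swapRank_le_of_mem_isSwap_pow hk)

end Equiv.Perm

open Equiv Perm

theorem ATrans_eq_swap_smul {n : ℕ} (h : 1 < n) :
    ATrans n = swap (⟨0, by omega⟩ : Fin n) ⟨1, h⟩ • {τ : Perm (Fin n) | τ.IsSwap} := by
  ext x
  simp only [ATrans, Set.mem_smul_set, smul_eq_mul]
  constructor
  · rintro ⟨-, i, j, hij, rfl⟩
    exact ⟨swap i j, ⟨i, j, hij.ne, rfl⟩, rfl⟩
  · rintro ⟨_, ⟨i, j, hij, rfl⟩, rfl⟩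
    rcases hij.lt_or_gt with hij | hij
    · exact ⟨h, i, j, hij, rfl⟩
    · exact ⟨h, j, i, hij, by rw [swap_comm i j]⟩

theorem alen_eq_sInf (n : ℕ) (v : Perm (Fin n)) : alen n v = sInf {k | v ∈ ATrans n ^ k} := by
  simp only [alen, Set.mem_pow_iff_exists_list]

/-- For `n ≥ 2` and `v ∈ A_n`, the letters `1` and `2` lie in the same cycle of `v`
iff `ℓ(v)` is odd. -/
theorem stmt_8 (n : ℕ) (hn : 2 ≤ n) (v : Equiv.Perm (Fin n))
    (hv : v ∈ alternatingGroup (Fin n)) :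
    v.SameCycle ⟨0, by omega⟩ ⟨1, by omega⟩ ↔ Odd (alen n v) := by
  have hab : (⟨0, by omega⟩ : Fin n) ≠ ⟨1, by omega⟩ := by simp [Fin.ext_iff]
  rw [alen_eq_sInf, ATrans_eq_swap_smul (by omega), sInf_mem_swap_smul_isSwap_pow_eq_min hab hv]
  constructor
  · intro h
    rw [min_eq_right (h.swapRank_swap_mul_lt hab).le]
    exact odd_swapRank_swap_mul hab hv
  · intro hodd
    by_contra h
    rw [min_eq_left (swapRank_lt_swapRank_swap_mul h).le] at hodd
    exact Nat.not_odd_iff_even.mpr (mem_alternatingGroup_iff_even_swapRank.mp hv) hodd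
end

section
/- For every n ≥ 3 and every v ∈ A_n: if ℓ(v) is even then cyc(v) = n - ℓ(v), and if ℓ(v) is odd then cyc(v) = n - ℓ(v) - 1. -/
/-- `cyc(v)`: the number of cycles of `v` including fixed points, i.e. the number of
orbits of the cyclic group generated by `v` acting on `Fin n`. -/
noncomputable def cycNum (n : ℕ) (v : Equiv.Perm (Fin n)) : ℕ :=
  Nat.card (MulAction.orbitRel.Quotient (Subgroup.zpowers v) (Fin n))

open Equiv Equiv.Perm

namespace Setoid

variable {α : Type*}

/-- The join of `r` with the single pair `(a, b)`. -/
def glue (r : Setoid α) (a b : α) : Setoid α where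
  r x y := r x y ∨ r x a ∧ r b y ∨ r x b ∧ r a y
  iseqv := by
    refine ⟨fun x => Or.inl (r.refl' x), ?_, ?_⟩
    · rintro x y (h | ⟨h, h'⟩ | ⟨h, h'⟩)
      · exact Or.inl (r.symm' h)
      · exact Or.inr (Or.inr ⟨r.symm' h', r.symm' h⟩)
      · exact Or.inr (Or.inl ⟨r.symm' h', r.symm' h⟩)
    · rintro x y z (h | ⟨h, h'⟩ | ⟨h, h'⟩) (k | ⟨k, k'⟩ | ⟨k, k'⟩) <;>
        grind [r.symm', r.trans']

variable {r s : Setoid α} {a b : α}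

theorem le_glue (r : Setoid α) (a b : α) : r ≤ r.glue a b := fun _ _ h => Or.inl h

theorem glue_rel (r : Setoid α) (a b : α) : r.glue a b a b :=
  Or.inr (Or.inl ⟨r.refl' a, r.refl' b⟩)

theorem glue_le (hrs : r ≤ s) (hab : s a b) : r.glue a b ≤ s := by
  rintro x y (h | ⟨hx, hy⟩ | ⟨hx, hy⟩)
  · exact hrs h
  · exact s.trans' (hrs hx) (s.trans' hab (hrs hy))
  · exact s.trans' (hrs hx) (s.trans' (s.symm' hab) (hrs hy))

theorem glue_eq_self (hab : r a b) : r.glue a b = r :=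
  le_antisymm (glue_le le_rfl hab) (le_glue r a b)

theorem surjective_map_of_le (h : r ≤ s) : Function.Surjective (map_of_le h) :=
  Quotient.ind fun x => ⟨⟦x⟧, rfl⟩

variable [Finite α]

theorem card_quotient_le_of_le (h : r ≤ s) : Nat.card (Quotient s) ≤ Nat.card (Quotient r) :=
  Nat.card_le_card_of_surjective _ (surjective_map_of_le h)

theorem card_quotient_lt_of_le (h : r ≤ s) (hs : s a b) (hr : ¬ r a b) :
    Nat.card (Quotient s) < Nat.card (Quotient r) := by
  by_contra! hle
  have hbij := (surjective_map_of_le h).bijective_of_nat_card_le hle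
  exact hr (Quotient.exact (hbij.injective (a₁ := ⟦a⟧) (a₂ := ⟦b⟧) (Quotient.sound hs)))

theorem card_quotient_le_card_quotient_glue_add_one (r : Setoid α) (a b : α) :
    Nat.card (Quotient r) ≤ Nat.card (Quotient (r.glue a b)) + 1 := by
  classical
  let f : Quotient r → Option (Quotient (r.glue a b)) :=
    Quotient.lift (fun x => if r x b then none else some ⟦x⟧) fun x y hxy => by
      by_cases hx : r x b
      · simp [hx, r.trans' (r.symm' hxy) hx]
      · have hy : ¬ r y b := fun hy => hx (r.trans' hxy hy)
        simpa [hx, hy] using Quotient.sound (le_glue r a b hxy)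
  have hf : Function.Injective f := by
    refine Quotient.ind₂ fun x y hxy => Quotient.sound ?_
    by_cases hx : r x b <;> by_cases hy : r y b <;> simp [f, hx, hy] at hxy
    · exact r.trans' hx (r.symm' hy)
    · rcases Quotient.exact hxy with h | ⟨-, h⟩ | ⟨h, -⟩
      · exact h
      · exact absurd (r.symm' h) hy
      · exact absurd h hx
  calc Nat.card (Quotient r) ≤ Nat.card (Option (Quotient (r.glue a b))) :=
        Nat.card_le_card_of_injective f hf
    _ = _ := Finite.card_option

end Setoid

namespace Equiv.Perm

variable {α : Type*}

theorem SameCycle.setoid_le {u : Perm α} {s : Setoid α} (h : ∀ z, s z (u z)) :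
    SameCycle.setoid u ≤ s := by
  rintro x _ ⟨i, rfl⟩
  induction i using Int.induction_on with
  | zero => exact s.refl' x
  | succ i ih => exact s.trans' ih (by rw [add_comm, zpow_add, zpow_one, mul_apply]; exact h _)
  | pred i ih =>
    refine s.trans' ih (s.symm' ?_)
    have := h ((u ^ (-(i : ℤ) - 1)) x)
    rwa [← mul_apply, ← zpow_one_add, add_sub_cancel] at this

/-- The number of cycles of `u`, fixed points included. -/
noncomputable def numCycles (u : Perm α) : ℕ :=
  Nat.card (Quotient (SameCycle.setoid u))

theorem numCycles_one : (1 : Perm α).numCycles = Nat.card α := by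
  have h : SameCycle.setoid (1 : Perm α) = ⊥ := by
    ext x y
    exact sameCycle_one
  rw [numCycles, h, Nat.card_congr Setoid.quotientBotEquiv]

variable [DecidableEq α]

theorem setoid_le_glue_swap_mul (u : Perm α) (a b : α) :
    SameCycle.setoid u ≤ (SameCycle.setoid (swap a b * u)).glue a b := by
  refine SameCycle.setoid_le fun z => ?_
  have hz : SameCycle (swap a b * u) z (swap a b (u z)) := ⟨1, by simp⟩
  refine Setoid.trans' _ (Setoid.le_glue _ a b hz) ?_
  rcases eq_or_ne (u z) a with h | h
  · rw [h, swap_apply_left]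
    exact Setoid.symm' _ (Setoid.glue_rel _ a b)
  rcases eq_or_ne (u z) b with h' | h'
  · rw [h', swap_apply_right]
    exact Setoid.glue_rel _ a b
  · rw [swap_apply_of_ne_of_ne h h']

/-- `swap a b * u` and `u` differ only in which of `a`, `b` they send points to, so their cycle
partitions agree once the classes of `a` and `b` are merged. -/
theorem glue_setoid_swap_mul (u : Perm α) (a b : α) :
    (SameCycle.setoid (swap a b * u)).glue a b = (SameCycle.setoid u).glue a b := by
  refine le_antisymm (Setoid.glue_le ?_ (Setoid.glue_rel _ a b))
    (Setoid.glue_le (setoid_le_glue_swap_mul u a b) (Setoid.glue_rel _ a b))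
  have := setoid_le_glue_swap_mul (swap a b * u) a b
  rwa [swap_mul_self_mul] at this

theorem IsSwap.conj_s9 {t : Perm α} (ht : t.IsSwap) (σ : Perm α) : (σ * t * σ⁻¹).IsSwap := by
  obtain ⟨c, d, hcd, rfl⟩ := ht
  exact ⟨σ c, σ d, σ.injective.ne hcd, (swap_apply_apply σ c d).symm⟩

theorem exists_prod_eq_pow_mul_prod {s : Perm α} (l : List (Perm α))
    (hl : ∀ g ∈ l, ∃ t, t.IsSwap ∧ g = s * t) :
    ∃ m : List (Perm α), (∀ t ∈ m, t.IsSwap) ∧ m.length = l.length ∧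
      l.prod = s ^ l.length * m.prod := by
  induction l with
  | nil => exact ⟨[], by simp, rfl, by simp⟩
  | cons g l ih =>
    obtain ⟨m, hm, hlen, hprod⟩ := ih fun g hg => hl g (List.mem_cons_of_mem _ hg)
    obtain ⟨t, ht, rfl⟩ := hl g List.mem_cons_self
    -- `s * t * s ^ k = s ^ (k + 1) * (s⁻ᵏ t sᵏ)`
    refine ⟨(s ^ l.length)⁻¹ * t * (s ^ l.length)⁻¹⁻¹ :: m,
      List.forall_mem_cons.2 ⟨ht.conj_s9 _, hm⟩, by simp [hlen], ?_⟩
    rw [List.prod_cons, List.prod_cons, hprod, List.length_cons]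
    group

theorem exists_prod_eq_of_even_length {s : Perm α} (hs : s.IsSwap) {l : List (Perm α)}
    (hl : ∀ t ∈ l, t.IsSwap) (he : Even l.length) :
    ∃ l' : List (Perm α), (∀ g ∈ l', ∃ t, t.IsSwap ∧ g = s * t) ∧
      l'.length = l.length ∧ l'.prod = l.prod := by
  induction l using List.twoStepInduction with
  | nil => exact ⟨[], by simp, rfl, rfl⟩
  | singleton t => simp at he
  | cons_cons t₁ t₂ l ih _ =>
    obtain ⟨l', hl', hlen, hprod⟩ := ih (fun t ht => hl t (by simp [ht]))
      (by simpa [Nat.even_add_one] using he)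
    obtain ⟨c, d, -, rfl⟩ := hs
    -- `t₁ t₂ = (s · s t₁ s) (s · t₂)` as `s = s⁻¹`
    refine ⟨swap c d * (swap c d * t₁ * swap c d) :: swap c d * t₂ :: l', ?_, by simp [hlen], ?_⟩
    · have ht₁ : (swap c d * t₁ * swap c d).IsSwap := by
        simpa using (hl t₁ List.mem_cons_self).conj_s9 (swap c d)
      exact List.forall_mem_cons.2 ⟨⟨_, ht₁, rfl⟩,
        List.forall_mem_cons.2 ⟨⟨_, hl t₂ (by simp), rfl⟩, hl'⟩⟩
    · simp only [List.prod_cons, hprod, mul_assoc, swap_mul_self_mul]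

section Finite

variable [Finite α]

theorem numCycles_le_numCycles_swap_mul_add_one (u : Perm α) (a b : α) :
    u.numCycles ≤ (swap a b * u).numCycles + 1 :=
  calc u.numCycles ≤ Nat.card (Quotient ((SameCycle.setoid u).glue a b)) + 1 :=
        Setoid.card_quotient_le_card_quotient_glue_add_one _ a b
    _ = Nat.card (Quotient ((SameCycle.setoid (swap a b * u)).glue a b)) + 1 := by
        rw [glue_setoid_swap_mul]
    _ ≤ (swap a b * u).numCycles + 1 :=
        Nat.add_le_add_right (Setoid.card_quotient_le_of_le (Setoid.le_glue _ a b)) 1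

theorem numCycles_lt_numCycles_swap_mul {v : Perm α} {x : α} (hx : v x ≠ x) :
    v.numCycles < (swap x (v x) * v).numCycles := by
  have hglue : (SameCycle.setoid (swap x (v x) * v)).glue x (v x) = SameCycle.setoid v := by
    rw [glue_setoid_swap_mul, Setoid.glue_eq_self (sameCycle_apply_right.2 SameCycle.rfl)]
  have hfix : (swap x (v x) * v) x = x := by simp
  rw [numCycles, ← hglue]
  exact Setoid.card_quotient_lt_of_le (Setoid.le_glue _ _ _) (Setoid.glue_rel _ _ _)
    fun h => hx (h.eq_of_left hfix).symm

theorem card_le_numCycles_prod_add_length {l : List (Perm α)} (hl : ∀ t ∈ l, t.IsSwap) :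
    Nat.card α ≤ l.prod.numCycles + l.length := by
  induction l with
  | nil => simp [numCycles_one]
  | cons t l ih =>
    obtain ⟨a, b, -, rfl⟩ := hl t List.mem_cons_self
    have := numCycles_le_numCycles_swap_mul_add_one l.prod a b
    have := ih fun t ht => hl t (List.mem_cons_of_mem _ ht)
    simp only [List.prod_cons, List.length_cons]
    omega

theorem card_le_numCycles_prod_add_length_add_mod_two {s : Perm α} (hs : s.IsSwap)
    {l : List (Perm α)} (hl : ∀ g ∈ l, ∃ t, t.IsSwap ∧ g = s * t) :
    Nat.card α ≤ l.prod.numCycles + l.length + l.length % 2 := by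
  obtain ⟨m, hm, hlen, hprod⟩ := exists_prod_eq_pow_mul_prod l hl
  have hs2 : s ^ 2 = 1 := by
    obtain ⟨c, d, -, rfl⟩ := hs
    rw [sq, swap_mul_self]
  rw [pow_eq_pow_mod _ hs2, ← List.prod_replicate] at hprod
  have := card_le_numCycles_prod_add_length (l := List.replicate (l.length % 2) s ++ m) (by
    intro t ht
    rcases List.mem_append.1 ht with ht | ht
    · exact (List.eq_of_mem_replicate ht) ▸ hs
    · exact hm t ht)
  rw [List.prod_append, ← hprod, List.length_append, List.length_replicate, hlen] at this
  omega

end Finite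

section Fintype

variable [Fintype α]

theorem exists_swap_list_numCycles_add_length_le (v : Perm α) :
    ∃ l : List (Perm α), (∀ t ∈ l, t.IsSwap) ∧ l.prod = v ∧
      v.numCycles + l.length ≤ Nat.card α := by
  induction hc : v.support.card using Nat.strong_induction_on generalizing v with
  | _ c ih =>
  rcases eq_or_ne v 1 with rfl | hv
  · exact ⟨[], by simp, rfl, by simp [numCycles_one]⟩
  obtain ⟨x, hx⟩ : ∃ x, v x ≠ x := by
    by_contra! h
    exact hv (Equiv.ext h)
  obtain ⟨l, hl, hprod, hlen⟩ :=
    ih _ (hc ▸ card_support_swap_mul hx) (swap x (v x) * v) rfl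
  refine ⟨swap x (v x) :: l, ?_, by rw [List.prod_cons, hprod, swap_mul_self_mul], ?_⟩
  · exact List.forall_mem_cons.2 ⟨⟨x, v x, hx.symm, rfl⟩, hl⟩
  · have := numCycles_lt_numCycles_swap_mul hx
    simp only [List.length_cons]
    omega

theorem exists_swap_list_length_add_numCycles_eq (v : Perm α) :
    ∃ l : List (Perm α), (∀ t ∈ l, t.IsSwap) ∧ l.prod = v ∧
      l.length + v.numCycles = Nat.card α := by
  obtain ⟨l, hl, hprod, hle⟩ := exists_swap_list_numCycles_add_length_le v
  have hge := card_le_numCycles_prod_add_length hl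
  exact ⟨l, hl, hprod, by rw [hprod] at hge; omega⟩

end Fintype

end Equiv.Perm

theorem isSwap_swap_zero_one {n : ℕ} (h1 : 1 < n) :
    (swap (⟨0, by omega⟩ : Fin n) ⟨1, h1⟩).IsSwap :=
  ⟨_, _, by simp [Fin.ext_iff], rfl⟩

theorem mem_ATrans_iff {n : ℕ} (h1 : 1 < n) {g : Perm (Fin n)} :
    g ∈ ATrans n ↔ ∃ t : Perm (Fin n), t.IsSwap ∧ g = swap ⟨0, by omega⟩ ⟨1, h1⟩ * t := by
  constructor
  · rintro ⟨-, i, j, hij, rfl⟩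
    exact ⟨swap i j, ⟨i, j, hij.ne, rfl⟩, rfl⟩
  · rintro ⟨_, ⟨c, d, hcd, rfl⟩, rfl⟩
    rcases hcd.lt_or_gt with h | h
    · exact ⟨h1, c, d, h, rfl⟩
    · exact ⟨h1, d, c, h, by rw [swap_comm c d]⟩

theorem exists_ATrans_word_length_add_numCycles_eq {n : ℕ} (h1 : 1 < n) {v : Perm (Fin n)}
    (hv : v ∈ alternatingGroup (Fin n)) :
    ∃ w : List (Perm (Fin n)), (∀ g ∈ w, g ∈ ATrans n) ∧ w.prod = v ∧
      w.length + v.numCycles = n ∧ Even w.length := by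
  obtain ⟨l, hl, hprod, hlen⟩ := exists_swap_list_length_add_numCycles_eq v
  have heven : Even l.length := by
    have := sign_prod_list_swap hl
    rw [hprod, mem_alternatingGroup.mp hv] at this
    exact (neg_one_pow_eq_one_iff_even (by decide)).mp this.symm
  obtain ⟨w, hw, hwlen, hwprod⟩ :=
    exists_prod_eq_of_even_length (isSwap_swap_zero_one h1) hl heven
  refine ⟨w, fun g hg => (mem_ATrans_iff h1).2 (hw g hg), hwprod.trans hprod, ?_, hwlen ▸ heven⟩
  rw [hwlen, hlen, Nat.card_fin]

theorem cycNum_eq_numCycles {n : ℕ} (v : Perm (Fin n)) : cycNum n v = v.numCycles := by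
  have h : MulAction.orbitRel (Subgroup.zpowers v) (Fin n) = SameCycle.setoid v := by
    ext x y
    rw [MulAction.orbitRel_apply, MulAction.mem_orbit_iff, Subgroup.exists_zpowers]
    exact ⟨fun ⟨i, hi⟩ => SameCycle.symm ⟨i, hi⟩, fun h => h.symm⟩
  rw [cycNum, numCycles, MulAction.orbitRel.Quotient, h]

/-- For `n ≥ 3` and `v ∈ A_n`: if `ℓ(v)` is even then `cyc(v) = n - ℓ(v)`, and if
`ℓ(v)` is odd then `cyc(v) = n - ℓ(v) - 1`. -/
theorem stmt_9 (n : ℕ) (hn : 3 ≤ n) (v : Equiv.Perm (Fin n))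
    (hv : v ∈ alternatingGroup (Fin n)) :
    (Even (alen n v) → cycNum n v = n - alen n v) ∧
    (Odd (alen n v) → cycNum n v = n - alen n v - 1) := by
  have h1 : 1 < n := by omega
  obtain ⟨w, hw, hwprod, hwlen, heven⟩ := exists_ATrans_word_length_add_numCycles_eq h1 hv
  have hmem : w.length ∈ {k | ∃ l : List (Perm (Fin n)),
      (∀ x ∈ l, x ∈ ATrans n) ∧ l.length = k ∧ l.prod = v} := ⟨w, hw, rfl, hwprod⟩
  have hle : alen n v ≤ w.length := Nat.sInf_le hmem
  obtain ⟨L, hL, hLlen, hLprod⟩ : ∃ L : List (Perm (Fin n)),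
      (∀ x ∈ L, x ∈ ATrans n) ∧ L.length = alen n v ∧ L.prod = v := Nat.sInf_mem ⟨_, hmem⟩
  have hge := card_le_numCycles_prod_add_length_add_mod_two (isSwap_swap_zero_one h1)
    fun g hg => (mem_ATrans_iff h1).1 (hL g hg)
  rw [hLprod, hLlen, Nat.card_fin] at hge
  rw [cycNum_eq_numCycles, Nat.even_iff, Nat.odd_iff]
  rw [Nat.even_iff] at heven
  omega
end

section
/- For every n ≥ 3 and every v ∈ A_n, the reflection length of v in the symmetric group satisfies: ℓ_T(v) = ℓ(v) if ℓ(v) is even, and ℓ_T(v) = ℓ(v) + 1 if ℓ(v) is odd. In particular ℓ_T(v) is always even for v ∈ A_n. -/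
/-- The reflection length in `S_n`: the minimal number of transpositions whose product
is `v`. -/
noncomputable def tlen (n : ℕ) (v : Equiv.Perm (Fin n)) : ℕ :=
  sInf {k | ∃ l : List (Equiv.Perm (Fin n)),
    (∀ x ∈ l, x.IsSwap) ∧ l.length = k ∧ l.prod = v}

/-!
Let `s` be an involution in a conjugation-closed set `T` of group elements, and
`s • T = {s t | t ∈ T}`. Two factors can be traded for two, `x y = (s (s x s⁻¹)) (s y)`, so an
even-length `T`-word is an `s • T`-word of the same length. Conversely, moving the `s`'s to the
front by conjugation turns an `s • T`-word of length `k` into `s ^ k` times a `T`-word of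
length `k`, and `s ^ k` is `1` or `s` according to the parity of `k`. For transpositions and an
even permutation `v`, every `T`-word for `v` has even length (by the sign), which pins the
`T`-length down to `ℓ + ℓ % 2`, where `ℓ` is the `s • T`-length.
-/

open Pointwise

section WordLength

variable {G : Type*} [Group G]

def IsProdOfLength (T : Set G) (k : ℕ) (v : G) : Prop :=
  ∃ l : List G, (∀ x ∈ l, x ∈ T) ∧ l.length = k ∧ l.prod = v

noncomputable def wordLength (T : Set G) (v : G) : ℕ :=
  sInf {k | IsProdOfLength T k v}

variable {T : Set G} {s v : G} {k : ℕ}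

lemma isProdOfLength_zero : IsProdOfLength T 0 v ↔ v = 1 := by
  constructor
  · rintro ⟨l, -, hl, rfl⟩
    simp [List.length_eq_zero_iff.1 hl]
  · rintro rfl
    exact ⟨[], by simp⟩

lemma isProdOfLength_succ :
    IsProdOfLength T (k + 1) v ↔ ∃ x ∈ T, ∃ w, IsProdOfLength T k w ∧ v = x * w := by
  constructor
  · rintro ⟨_ | ⟨x, l⟩, hT, hl, rfl⟩
    · simp at hl
    · rw [List.forall_mem_cons] at hT
      exact ⟨x, hT.1, l.prod, ⟨l, hT.2, by simpa using hl, rfl⟩, rfl⟩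
  · rintro ⟨x, hx, w, ⟨l, hT, rfl, rfl⟩, rfl⟩
    exact ⟨x :: l, List.forall_mem_cons.2 ⟨hx, hT⟩, rfl, rfl⟩

lemma IsProdOfLength.wordLength_le (h : IsProdOfLength T k v) : wordLength T v ≤ k :=
  Nat.sInf_le h

lemma IsProdOfLength.isProdOfLength_wordLength (h : IsProdOfLength T k v) :
    IsProdOfLength T (wordLength T v) v :=
  Nat.sInf_mem (s := {k | IsProdOfLength T k v}) ⟨k, h⟩

lemma IsProdOfLength.exists_pow_mul (hT : ∀ g, ∀ x ∈ T, g * x * g⁻¹ ∈ T)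
    (h : IsProdOfLength (s • T) k v) : ∃ w, IsProdOfLength T k w ∧ v = s ^ k * w := by
  induction k generalizing v with
  | zero => exact ⟨1, isProdOfLength_zero.2 rfl, by simpa [isProdOfLength_zero] using h⟩
  | succ k ih =>
    obtain ⟨x, hx, w, hw, rfl⟩ := isProdOfLength_succ.1 h
    obtain ⟨t, ht, rfl⟩ := Set.mem_smul_set.1 hx
    obtain ⟨u, hu, rfl⟩ := ih hw
    have ht' := hT (s ^ k)⁻¹ t ht
    refine ⟨_ * u, isProdOfLength_succ.2 ⟨_, ht', u, hu, rfl⟩, ?_⟩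
    rw [smul_eq_mul]
    group

lemma IsProdOfLength.smul_of_even (hT : ∀ g, ∀ x ∈ T, g * x * g⁻¹ ∈ T) (hs : s * s = 1)
    (h : IsProdOfLength T k v) (hk : Even k) : IsProdOfLength (s • T) k v := by
  have hs_inv : s⁻¹ = s := (mul_eq_one_iff_eq_inv.1 hs).symm
  obtain ⟨m, rfl⟩ := hk
  induction m generalizing v with
  | zero => simpa [isProdOfLength_zero] using h
  | succ m ih =>
    rw [show m + 1 + (m + 1) = m + m + 1 + 1 by omega] at h ⊢
    obtain ⟨x, hx, w, hw, rfl⟩ := isProdOfLength_succ.1 h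
    obtain ⟨y, hy, u, hu, rfl⟩ := isProdOfLength_succ.1 hw
    have hxs : x * s ∈ s • T := ⟨s * x * s⁻¹, hT s x hx, by
      simp only [smul_eq_mul, hs_inv, ← mul_assoc, hs, one_mul]⟩
    refine isProdOfLength_succ.2 ⟨x * s, hxs, s * y * u,
      isProdOfLength_succ.2 ⟨s * y, ⟨y, hy, rfl⟩, u, ih hu, rfl⟩, ?_⟩
    simp only [← mul_assoc, mul_assoc x s s, hs, mul_one]

lemma IsProdOfLength.add_mod_two_of_smul (hT : ∀ g, ∀ x ∈ T, g * x * g⁻¹ ∈ T) (hsT : s ∈ T)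
    (hs : s * s = 1) (h : IsProdOfLength (s • T) k v) : IsProdOfLength T (k + k % 2) v := by
  obtain ⟨w, hw, rfl⟩ := h.exists_pow_mul hT
  rcases Nat.even_or_odd' k with ⟨m, rfl | rfl⟩
  · rwa [Nat.mul_mod_right, add_zero, pow_mul, sq, hs, one_pow, one_mul]
  · rw [Nat.mul_add_mod, pow_succ, pow_mul, sq, hs, one_pow, one_mul]
    exact isProdOfLength_succ.2 ⟨s, hsT, w, hw, rfl⟩

theorem wordLength_eq_wordLength_smul_add_mod_two (hT : ∀ g, ∀ x ∈ T, g * x * g⁻¹ ∈ T)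
    (hsT : s ∈ T) (hs : s * s = 1) (hv : ∃ k, IsProdOfLength T k v)
    (heven : ∀ k, IsProdOfLength T k v → Even k) :
    wordLength T v = wordLength (s • T) v + wordLength (s • T) v % 2 := by
  obtain ⟨k, hk⟩ := hv
  have hT_min := hk.isProdOfLength_wordLength
  obtain ⟨m, hm⟩ := heven _ hT_min
  have hsT_word := hT_min.smul_of_even hT hs ⟨m, hm⟩
  have hle : wordLength (s • T) v ≤ wordLength T v := hsT_word.wordLength_le
  have hge : wordLength T v ≤ wordLength (s • T) v + wordLength (s • T) v % 2 :=
    (hsT_word.isProdOfLength_wordLength.add_mod_two_of_smul hT hsT hs).wordLength_le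
  omega

end WordLength

section Perm

open Equiv

variable {α : Type*} [DecidableEq α]

lemma Equiv.Perm.conj_mem_setOf_isSwap (g : Perm α) :
    ∀ x ∈ {x : Perm α | x.IsSwap}, g * x * g⁻¹ ∈ {x : Perm α | x.IsSwap} := by
  rintro _ ⟨a, b, hab, rfl⟩
  exact ⟨g a, g b, g.injective.ne hab, (swap_apply_apply g a b).symm⟩

lemma IsProdOfLength.even_of_mem_alternatingGroup [Fintype α] {k : ℕ} {v : Perm α}
    (hv : v ∈ alternatingGroup α) (h : IsProdOfLength {x : Perm α | x.IsSwap} k v) : Even k := by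
  obtain ⟨l, hl, rfl, rfl⟩ := h
  rw [← neg_one_pow_eq_one_iff_even (R := ℤˣ) (by decide), ← Perm.sign_prod_list_swap hl]
  exact hv

lemma exists_isProdOfLength_isSwap [Finite α] (v : Perm α) :
    ∃ k, IsProdOfLength {x : Perm α | x.IsSwap} k v := by
  have := Fintype.ofFinite α
  obtain ⟨l, hl, hswap⟩ := (Perm.truncSwapFactors v).out
  exact ⟨l.length, l, hswap, rfl, hl⟩

lemma ATrans_eq_smul {n : ℕ} (h : 1 < n) :
    ATrans n = swap (⟨0, by omega⟩ : Fin n) ⟨1, h⟩ • {x : Perm (Fin n) | x.IsSwap} := by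
  ext a
  simp only [ATrans, Set.mem_smul_set, smul_eq_mul]
  constructor
  · rintro ⟨-, i, j, hij, rfl⟩
    exact ⟨swap i j, ⟨i, j, hij.ne, rfl⟩, rfl⟩
  · rintro ⟨_, ⟨i, j, hij, rfl⟩, rfl⟩
    rcases hij.lt_or_gt with hij | hij
    · exact ⟨h, i, j, hij, rfl⟩
    · exact ⟨h, j, i, hij, by rw [swap_comm j i]⟩

end Perm

/-- For `n ≥ 3` and `v ∈ A_n`: `ℓ_T(v) = ℓ(v)` if `ℓ(v)` is even, `ℓ_T(v) = ℓ(v) + 1`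
if `ℓ(v)` is odd; in particular `ℓ_T(v)` is always even. -/
theorem stmt_11 (n : ℕ) (hn : 3 ≤ n) (v : Equiv.Perm (Fin n))
    (hv : v ∈ alternatingGroup (Fin n)) :
    (Even (alen n v) → tlen n v = alen n v) ∧
    (Odd (alen n v) → tlen n v = alen n v + 1) ∧
    Even (tlen n v) := by
  have h1 : 1 < n := by omega
  have key : tlen n v = alen n v + alen n v % 2 := by
    change wordLength _ v = wordLength (ATrans n) v + wordLength (ATrans n) v % 2
    rw [ATrans_eq_smul h1]
    exact wordLength_eq_wordLength_smul_add_mod_two Equiv.Perm.conj_mem_setOf_isSwap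
      (Equiv.Perm.swap_isSwap_iff.2 (by simp [Fin.ext_iff])) (Equiv.swap_mul_self _ _)
      (exists_isProdOfLength_isSwap v) fun _ hk => hk.even_of_mem_alternatingGroup hv
  simp only [Nat.even_iff, Nat.odd_iff]
  omega
end
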